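/- arXiv:1503.07095 — 6 statements merged into one kernel-verified Lean document; each statement's English description precedes it below -/
import Mathlib

section
/- For every p, r ∈ ℕ₀ there exists q ∈ ℕ₀ such that for all ξ ∈ s with ‖ξ‖_{ℓ₂} = 1 one has |ξ|_p^r ≤ |ξ|_q. (One may take q = 2^j p for any j ∈ ℕ₀ with r ≤ 2^j.) -/
/-!
By Cauchy–Schwarz, `|ξ|_{m+n}² ≤ |ξ|_{2m} |ξ|_{2n}`; with `m = 0` and `|ξ|_0 = 1` this reads
`|ξ|_p² ≤ |ξ|_{2p}`, and iterating gives `|ξ|_p^(2^k) ≤ |ξ|_{2^k p}`. Since `|ξ|_p ≥ |ξ|_0 = 1`,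
the power `r` may be raised to `2^r`.
-/

noncomputable section

/-- Membership in the space `s` of rapidly decreasing sequences (the paper's index
`j ∈ {1,2,...}` corresponds to `j+1` here). -/
def inS (ξ : ℕ → ℂ) : Prop :=
  ∀ q : ℕ, Summable fun j : ℕ => ‖ξ j‖ ^ 2 * ((j : ℝ) + 1) ^ (2 * q)

/-- The `q`-th norm `|ξ|_q = (∑_j |ξ_j|² (j+1)^(2q))^(1/2)` on `s`;
`sNorm 0` is the `ℓ₂`-norm. -/
def sNorm (q : ℕ) (ξ : ℕ → ℂ) : ℝ :=
  Real.sqrt (∑' j : ℕ, ‖ξ j‖ ^ 2 * ((j : ℝ) + 1) ^ (2 * q))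

lemma sq_sNorm (q : ℕ) (ξ : ℕ → ℂ) :
    sNorm q ξ ^ 2 = ∑' j : ℕ, ‖ξ j‖ ^ 2 * ((j : ℝ) + 1) ^ (2 * q) :=
  Real.sq_sqrt (tsum_nonneg fun _ => by positivity)

lemma sNorm_mono {ξ : ℕ → ℂ} (hξ : inS ξ) : Monotone fun q => sNorm q ξ := fun p q h => by
  refine Real.sqrt_le_sqrt (Summable.tsum_le_tsum (fun j => ?_) (hξ p) (hξ q))
  gcongr
  exact le_add_of_nonneg_left j.cast_nonneg

lemma sq_sNorm_add_le {ξ : ℕ → ℂ} (hξ : inS ξ) (m n : ℕ) :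
    sNorm (m + n) ξ ^ 2 ≤ sNorm (2 * m) ξ * sNorm (2 * n) ξ := by
  set w : ℕ → ℕ → ℝ := fun k j => ‖ξ j‖ * ((j : ℝ) + 1) ^ (2 * k)
  have hw_sq : ∀ k j, w k j ^ (2 : ℝ) = ‖ξ j‖ ^ 2 * ((j : ℝ) + 1) ^ (2 * (2 * k)) :=
    fun k j => by rw [Real.rpow_two, mul_pow, ← pow_mul]; ring_nf
  have hw_mul : ∀ j, w m j * w n j = ‖ξ j‖ ^ 2 * ((j : ℝ) + 1) ^ (2 * (m + n)) :=
    fun j => by ring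
  have := Real.inner_le_Lp_mul_Lq_tsum_of_nonneg Real.HolderConjugate.two_two
    (fun j => by positivity : ∀ j, 0 ≤ w m j) (fun j => by positivity : ∀ j, 0 ≤ w n j)
    ((hξ (2 * m)).congr fun j => (hw_sq m j).symm) ((hξ (2 * n)).congr fun j => (hw_sq n j).symm)
  rw [sq_sNorm]
  simpa only [hw_mul, hw_sq, ← Real.sqrt_eq_rpow, sNorm] using this

lemma sNorm_pow_two_pow_le {ξ : ℕ → ℂ} (hξ : inS ξ) (h0 : sNorm 0 ξ = 1) (p k : ℕ) :
    sNorm p ξ ^ 2 ^ k ≤ sNorm (2 ^ k * p) ξ := by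
  induction k with
  | zero => simp
  | succ k ih =>
    calc sNorm p ξ ^ 2 ^ (k + 1) = (sNorm p ξ ^ 2 ^ k) ^ 2 := by rw [pow_succ, pow_mul]
      _ ≤ sNorm (2 ^ k * p) ξ ^ 2 := by gcongr; exact pow_nonneg (Real.sqrt_nonneg _) _
      _ ≤ sNorm 0 ξ * sNorm (2 * (2 ^ k * p)) ξ := by
        simpa using sq_sNorm_add_le hξ 0 (2 ^ k * p)
      _ = sNorm (2 ^ (k + 1) * p) ξ := by rw [h0, one_mul, pow_succ', mul_assoc]

/-- For every `p, r ∈ ℕ₀` there is `q ∈ ℕ₀` such that `|ξ|_p ^ r ≤ |ξ|_q`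
for all `ξ ∈ s` with `‖ξ‖_{ℓ₂} = 1`. -/
theorem stmt_1 (p r : ℕ) :
    ∃ q : ℕ, ∀ ξ : ℕ → ℂ, inS ξ → sNorm 0 ξ = 1 → (sNorm p ξ) ^ r ≤ sNorm q ξ := by
  refine ⟨2 ^ r * p, fun ξ hξ h0 => ?_⟩
  have one_le : 1 ≤ sNorm p ξ := h0 ▸ sNorm_mono hξ p.zero_le
  calc sNorm p ξ ^ r ≤ sNorm p ξ ^ 2 ^ r := pow_le_pow_right₀ one_le r.lt_two_pow_self.le
    _ ≤ sNorm (2 ^ r * p) ξ := sNorm_pow_two_pow_le hξ h0 p r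

end
end

section
/- Let A and B be Köthe matrices such that λ^∞(A) and λ^∞(B) are closed under pointwise multiplication (hence are *-algebras under pointwise operations and complex conjugation). If Φ : λ^∞(A) → λ^∞(B) is a bijective ℂ-algebra homomorphism, then there exists a bijection σ : ℕ → ℕ such that Φ(e_{σ(k)}) = e_k for every k ∈ ℕ; consequently λ^∞(A_σ) = λ^∞(B) as sets, where A_σ := (a_{σ(j),q})_{j,q}. -/
/-- `a : ℕ → ℕ → ℝ`, `a j q` being the entry `a_{j,q}`, is a Köthe matrix. -/
def IsKotheMatrix (a : ℕ → ℕ → ℝ) : Prop :=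
  (∀ j q, 0 ≤ a j q) ∧ (∀ j, ∃ q, 0 < a j q) ∧ (∀ j q, a j q ≤ a j (q + 1))

/-- The Köthe space `λ^∞(A)`. -/
def lambdaInf (a : ℕ → ℕ → ℝ) : Set (ℕ → ℂ) :=
  {ξ | ∀ q : ℕ, ∃ C : ℝ, ∀ j : ℕ, ‖ξ j‖ * a j q ≤ C}

/-- The `k`-th unit vector `e_k`. -/
def eSeq (k : ℕ) : ℕ → ℂ := fun j => if j = k then 1 else 0

lemma complexIdem {z : ℂ} (h : z * z = z) : z = 0 ∨ z = 1 := by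
  have h2 : z * (z - 1) = 0 := by linear_combination h
  rcases mul_eq_zero.mp h2 with h3 | h3
  · exact Or.inl h3
  · exact Or.inr (sub_eq_zero.mp h3)

lemma eSeq_mem (a : ℕ → ℕ → ℝ) (ha : IsKotheMatrix a) (k : ℕ) :
    eSeq k ∈ lambdaInf a := by
  intro q
  refine ⟨a k q, fun j => ?_⟩
  by_cases h : j = k
  · subst h; simp [eSeq]
  · simp [eSeq, h, ha.1 k q]

lemma zero_mem_lambdaInf (a : ℕ → ℕ → ℝ) : (0 : ℕ → ℂ) ∈ lambdaInf a :=
  fun q => ⟨0, fun j => by simp⟩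

lemma eSeq_mul_self (k : ℕ) : eSeq k * eSeq k = eSeq k := by
  funext j
  by_cases h : j = k <;> simp [eSeq, h]

lemma eSeq_ne_zero (k : ℕ) : eSeq k ≠ 0 := by
  intro h
  have := congrFun h k
  simp [eSeq] at this

/-- If `λ^∞(A)` and `λ^∞(B)` are closed under pointwise multiplication and
`Φ : λ^∞(A) → λ^∞(B)` is a bijective `ℂ`-algebra homomorphism, then there is a
bijection `σ : ℕ → ℕ` with `Φ (e_{σ k}) = e_k` for all `k`, and `λ^∞(A_σ) = λ^∞(B)`
as sets. -/
theorem stmt_3 (a b : ℕ → ℕ → ℝ) (ha : IsKotheMatrix a) (hb : IsKotheMatrix b)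
    (hamul : ∀ ξ ∈ lambdaInf a, ∀ η ∈ lambdaInf a, ξ * η ∈ lambdaInf a)
    (hbmul : ∀ ξ ∈ lambdaInf b, ∀ η ∈ lambdaInf b, ξ * η ∈ lambdaInf b)
    (Φ : (ℕ → ℂ) → (ℕ → ℂ))
    (hbij : Set.BijOn Φ (lambdaInf a) (lambdaInf b))
    (hadd : ∀ ξ ∈ lambdaInf a, ∀ η ∈ lambdaInf a, Φ (ξ + η) = Φ ξ + Φ η)
    (hsmul : ∀ (c : ℂ), ∀ ξ ∈ lambdaInf a, Φ (c • ξ) = c • Φ ξ)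
    (hmul : ∀ ξ ∈ lambdaInf a, ∀ η ∈ lambdaInf a, Φ (ξ * η) = Φ ξ * Φ η) :
    ∃ σ : ℕ → ℕ, Function.Bijective σ ∧ (∀ k : ℕ, Φ (eSeq (σ k)) = eSeq k) ∧
      lambdaInf (fun j q => a (σ j) q) = lambdaInf b := by
  have hea : ∀ k, eSeq k ∈ lambdaInf a := eSeq_mem a ha
  have h0a : (0 : ℕ → ℂ) ∈ lambdaInf a := zero_mem_lambdaInf a
  have hΦ0 : Φ 0 = 0 := by
    have h0' : Φ 0 = Φ 0 + Φ 0 := by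
      have := hadd 0 h0a 0 h0a
      simpa using this
    have h2 : Φ 0 + 0 = Φ 0 + Φ 0 := by rw [add_zero]; exact h0'
    exact (add_left_cancel h2).symm
  -- Step 1: each Φ (eSeq j) is some eSeq m
  have hτ : ∀ j, ∃ m, Φ (eSeq j) = eSeq m := by
    intro j
    set f := Φ (eSeq j) with hf_def
    have hf : f ∈ lambdaInf b := hbij.mapsTo (hea j)
    have hff : f * f = f := by
      rw [hf_def, ← hmul _ (hea j) _ (hea j), eSeq_mul_self]
    have hvals : ∀ m, f m = 0 ∨ f m = 1 := by
      intro m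
      have := congrFun hff m
      exact complexIdem this
    have hfne : f ≠ 0 := by
      intro h
      have : eSeq j = 0 := by
        apply hbij.injOn (hea j) h0a
        rw [← hf_def, h, hΦ0]
      exact eSeq_ne_zero j this
    have hex : ∃ m, f m = 1 := by
      by_contra h
      push_neg at h
      apply hfne
      funext m
      rcases hvals m with h0 | h1
      · exact h0
      · exact absurd h1 (h m)
    obtain ⟨m, hm⟩ := hex
    obtain ⟨ξ, hξa, hξ⟩ := hbij.surjOn (eSeq_mem b hb m)
    have hξξ : ξ * ξ = ξ := by
      apply hbij.injOn (hamul ξ hξa ξ hξa) hξa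
      rw [hmul _ hξa _ hξa, hξ, eSeq_mul_self]
    have hjξ : eSeq j * ξ = ξ := by
      apply hbij.injOn (hamul _ (hea j) ξ hξa) hξa
      rw [hmul _ (hea j) _ hξa, hξ, ← hf_def]
      funext i
      by_cases h : i = m
      · subst h; simp [eSeq, hm]
      · simp [eSeq, h]
    have hξvals : ∀ i, ξ i = 0 ∨ ξ i = 1 := fun i =>
      complexIdem (congrFun hξξ i)
    have hsupp : ∀ i, i ≠ j → ξ i = 0 := by
      intro i hi
      have := congrFun hjξ i
      simp [eSeq, hi] at this
      exact this.symm
    have hξj : ξ j = 1 := by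
      rcases hξvals j with h0 | h1
      · exfalso
        have hz : ξ = 0 := by
          funext i
          by_cases h : i = j
          · subst h; exact h0
          · exact hsupp i h
        rw [hz, hΦ0] at hξ
        have := congrFun hξ m
        simp [eSeq] at this
      · exact h1
    have hξe : ξ = eSeq j := by
      funext i
      by_cases h : i = j
      · subst h; simp [eSeq, hξj]
      · simp [eSeq, h, hsupp i h]
    exact ⟨m, by rw [hf_def, ← hξe, hξ]⟩
  choose τ hτspec using hτ
  -- τ injective
  have hτinj : Function.Injective τ := by
    intro j j' h
    have h1 : Φ (eSeq j) = Φ (eSeq j') := by rw [hτspec j, hτspec j', h]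
    have h2 : eSeq j = eSeq j' := hbij.injOn (hea j) (hea j') h1
    have := congrFun h2 j
    by_cases hjj : j = j'
    · exact hjj
    · simp [eSeq, hjj] at this
  -- τ surjective
  have hτsurj : Function.Surjective τ := by
    intro m
    obtain ⟨ξ, hξa, hξ⟩ := hbij.surjOn (eSeq_mem b hb m)
    have hξξ : ξ * ξ = ξ := by
      apply hbij.injOn (hamul ξ hξa ξ hξa) hξa
      rw [hmul _ hξa _ hξa, hξ, eSeq_mul_self]
    have hξvals : ∀ i, ξ i = 0 ∨ ξ i = 1 := fun i =>
      complexIdem (congrFun hξξ i)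
    have hne : ξ ≠ 0 := by
      intro h
      rw [h, hΦ0] at hξ
      have := congrFun hξ m
      simp [eSeq] at this
    have hex : ∃ j, ξ j = 1 := by
      by_contra h
      push_neg at h
      apply hne
      funext i
      rcases hξvals i with h0 | h1
      · exact h0
      · exact absurd h1 (h i)
    obtain ⟨j, hj⟩ := hex
    refine ⟨j, ?_⟩
    have hejξ : eSeq j * ξ = eSeq j := by
      funext i
      by_cases h : i = j
      · subst h; simp [eSeq, hj]
      · simp [eSeq, h]
    have h1 : Φ (eSeq j) = Φ (eSeq j) * eSeq m := by
      conv_lhs => rw [← hejξ]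
      rw [hmul _ (hea j) _ hξa, hξ]
    rw [hτspec j] at h1
    have := congrFun h1 (τ j)
    by_cases h : τ j = m
    · exact h
    · simp [eSeq, h] at this
  let E : ℕ ≃ ℕ := Equiv.ofBijective τ ⟨hτinj, hτsurj⟩
  have hEτ : ∀ k, τ (E.symm k) = k := fun k => E.apply_symm_apply k
  have hτE : ∀ j, E.symm (τ j) = j := fun j => E.symm_apply_apply j
  refine ⟨E.symm, E.symm.bijective, ?_, ?_⟩
  · intro k
    rw [hτspec, hEτ]
  · -- the diagonal formula
    have hdiag : ∀ ξ ∈ lambdaInf a, ∀ k, Φ ξ k = ξ (E.symm k) := by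
      intro ξ hξ k
      have h1 : ξ * eSeq (E.symm k) = ξ (E.symm k) • eSeq (E.symm k) := by
        funext i
        by_cases h : i = E.symm k
        · subst h; simp [eSeq]
        · simp [eSeq, h]
      have h2 : Φ (ξ * eSeq (E.symm k)) = Φ ξ * eSeq k := by
        rw [hmul _ hξ _ (hea _), hτspec, hEτ]
      have h3 : Φ (ξ * eSeq (E.symm k)) = ξ (E.symm k) • eSeq k := by
        rw [h1, hsmul _ _ (hea _), hτspec, hEτ]
      have h4 := congrFun (h2.symm.trans h3) k
      simpa [eSeq] using h4
    ext η
    constructor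
    · intro hη
      set ξ : ℕ → ℂ := fun i => η (τ i) with hξdef
      have hξa : ξ ∈ lambdaInf a := by
        intro q
        obtain ⟨C, hC⟩ := hη q
        refine ⟨C, fun j => ?_⟩
        have := hC (τ j)
        simpa [hξdef, hτE] using this
      have : Φ ξ = η := by
        funext k
        rw [hdiag ξ hξa k]
        show η (τ (E.symm k)) = η k
        rw [hEτ]
      rw [← this]
      exact hbij.mapsTo hξa
    · intro hη
      obtain ⟨ξ, hξa, rfl⟩ := hbij.surjOn hη
      intro q
      obtain ⟨C, hC⟩ := hξa q
      refine ⟨C, fun j => ?_⟩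
      rw [hdiag ξ hξa j]
      exact hC (E.symm j)
end

section
/- Let {N_k}_{k∈ℕ} be a family of finite nonempty pairwise disjoint subsets of ℕ, and let F be the closure, in the topology of s, of the *-subalgebra of s generated by {e_{N_k} : k ∈ ℕ}. Then F = {ξ ∈ s : ξ_i = ξ_j whenever i, j ∈ N_k for some k, and ξ_j = 0 for every j ∉ ⋃_{k∈ℕ} N_k}. -/
noncomputable section

/-- The characteristic sequence `e_N` of a set `N ⊆ ℕ`. -/
def eNset (N : Finset ℕ) : ℕ → ℂ := fun j => if j ∈ N then 1 else 0

/-- The *-subalgebra of `s` generated by `{e_{N_k} : k ∈ ℕ}`: the smallest subset of `s`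
containing all `e_{N_k}` and closed under addition, scalar multiplication, pointwise
multiplication and pointwise complex conjugation (`star`). -/
def genStarSubalg (N : ℕ → Finset ℕ) : Set (ℕ → ℂ) :=
  ⋂₀ {T : Set (ℕ → ℂ) |
      (∀ k, eNset (N k) ∈ T) ∧ (∀ ξ ∈ T, inS ξ) ∧
      (∀ ξ ∈ T, ∀ η ∈ T, ξ + η ∈ T) ∧ (∀ (c : ℂ), ∀ ξ ∈ T, c • ξ ∈ T) ∧
      (∀ ξ ∈ T, ∀ η ∈ T, ξ * η ∈ T) ∧ (∀ ξ ∈ T, star ξ ∈ T)}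

/- ### Auxiliary lemmas -/

lemma inS_add {ξ η : ℕ → ℂ} (hξ : inS ξ) (hη : inS η) : inS (ξ + η) := by
  intro q
  refine Summable.of_nonneg_of_le (fun j => by positivity) (fun j => ?_)
    (((hξ q).add (hη q)).mul_left 2)
  have h1 : ‖(ξ + η) j‖ ≤ ‖ξ j‖ + ‖η j‖ := norm_add_le _ _
  have h2 : (0:ℝ) < ((j:ℝ)+1) ^ (2*q) := by positivity
  have h3 : ‖(ξ + η) j‖ ^ 2 ≤ 2 * (‖ξ j‖ ^ 2 + ‖η j‖ ^ 2) := by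
    nlinarith [norm_nonneg ((ξ + η) j), norm_nonneg (ξ j), norm_nonneg (η j),
      sq_nonneg (‖ξ j‖ - ‖η j‖), sq_nonneg (‖ξ j‖ + ‖η j‖),
      mul_self_le_mul_self (norm_nonneg ((ξ + η) j)) h1]
  calc ‖(ξ + η) j‖ ^ 2 * ((j:ℝ)+1) ^ (2*q)
      ≤ 2 * (‖ξ j‖ ^ 2 + ‖η j‖ ^ 2) * ((j:ℝ)+1) ^ (2*q) := by
        exact mul_le_mul_of_nonneg_right h3 h2.le
    _ = 2 * (‖ξ j‖ ^ 2 * ((j:ℝ)+1) ^ (2*q) + ‖η j‖ ^ 2 * ((j:ℝ)+1) ^ (2*q)) := by ring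

lemma inS_smul (c : ℂ) {ξ : ℕ → ℂ} (hξ : inS ξ) : inS (c • ξ) := by
  intro q
  refine ((hξ q).mul_left (‖c‖ ^ 2)).congr fun j => ?_
  simp [Pi.smul_apply, norm_smul, mul_pow, mul_assoc]

lemma inS_mul {ξ η : ℕ → ℂ} (hξ : inS ξ) (hη : inS η) : inS (ξ * η) := by
  intro q
  have hsum0 : Summable (fun j : ℕ => ‖η j‖ ^ 2) :=
    (hη 0).congr fun j => by simp
  set S := ∑' j : ℕ, ‖η j‖ ^ 2 with hS
  have hb : ∀ j, ‖η j‖ ^ 2 ≤ S :=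
    fun j => Summable.le_tsum hsum0 j (fun i _ => sq_nonneg _)
  refine Summable.of_nonneg_of_le (fun j => by positivity) (fun j => ?_)
    ((hξ q).mul_left S)
  have h2 : (0:ℝ) ≤ ((j:ℝ)+1) ^ (2*q) := by positivity
  have : ‖(ξ * η) j‖ ^ 2 = ‖ξ j‖ ^ 2 * ‖η j‖ ^ 2 := by
    simp [Pi.mul_apply, norm_mul, mul_pow]
  rw [this]
  calc ‖ξ j‖ ^ 2 * ‖η j‖ ^ 2 * ((j:ℝ)+1) ^ (2*q)
      ≤ ‖ξ j‖ ^ 2 * S * ((j:ℝ)+1) ^ (2*q) := by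
        have := mul_le_mul_of_nonneg_left (hb j) (sq_nonneg ‖ξ j‖)
        exact mul_le_mul_of_nonneg_right this h2
    _ = S * (‖ξ j‖ ^ 2 * ((j:ℝ)+1) ^ (2*q)) := by ring

lemma inS_star {ξ : ℕ → ℂ} (hξ : inS ξ) : inS (star ξ) := by
  intro q
  refine (hξ q).congr fun j => ?_
  simp [Pi.star_apply, norm_star]

lemma inS_neg {ξ : ℕ → ℂ} (hξ : inS ξ) : inS (-ξ) := by
  intro q
  refine (hξ q).congr fun j => ?_
  simp

lemma inS_sub {ξ η : ℕ → ℂ} (hξ : inS ξ) (hη : inS η) : inS (ξ - η) := by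
  have := inS_add hξ (inS_neg hη)
  simpa [sub_eq_add_neg] using this

lemma inS_eNset (N : Finset ℕ) : inS (eNset N) := by
  intro q
  refine summable_of_ne_finset_zero (s := N) fun j hj => ?_
  simp [eNset, hj]

/-- The target set: elements of `s` constant on each `N k` and vanishing off the union. -/
def goodSet (N : ℕ → Finset ℕ) : Set (ℕ → ℂ) :=
  {ξ : ℕ → ℂ | inS ξ ∧ (∀ k, ∀ i ∈ N k, ∀ j ∈ N k, ξ i = ξ j) ∧
    (∀ j : ℕ, (∀ k, j ∉ N k) → ξ j = 0)}

lemma goodSet_mem_family (N : ℕ → Finset ℕ)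
    (hdisj : ∀ k l, k ≠ l → Disjoint (N k) (N l)) :
    goodSet N ∈ {T : Set (ℕ → ℂ) |
      (∀ k, eNset (N k) ∈ T) ∧ (∀ ξ ∈ T, inS ξ) ∧
      (∀ ξ ∈ T, ∀ η ∈ T, ξ + η ∈ T) ∧ (∀ (c : ℂ), ∀ ξ ∈ T, c • ξ ∈ T) ∧
      (∀ ξ ∈ T, ∀ η ∈ T, ξ * η ∈ T) ∧ (∀ ξ ∈ T, star ξ ∈ T)} := by
  refine ⟨?_, fun ξ hξ => hξ.1, ?_, ?_, ?_, ?_⟩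
  · -- generators
    intro k
    refine ⟨inS_eNset _, ?_, ?_⟩
    · intro l i hi j hj
      by_cases h : l = k
      · subst h
        simp [eNset, hi, hj]
      · have hik : i ∉ N k := Finset.disjoint_left.mp (hdisj l k h) hi
        have hjk : j ∉ N k := Finset.disjoint_left.mp (hdisj l k h) hj
        simp [eNset, hik, hjk]
    · intro j hj
      simp [eNset, hj k]
  · rintro ξ ⟨hξ1, hξ2, hξ3⟩ η ⟨hη1, hη2, hη3⟩
    refine ⟨inS_add hξ1 hη1, ?_, ?_⟩
    · intro k i hi j hj
      simp [hξ2 k i hi j hj, hη2 k i hi j hj]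
    · intro j hj
      simp [hξ3 j hj, hη3 j hj]
  · rintro c ξ ⟨hξ1, hξ2, hξ3⟩
    refine ⟨inS_smul c hξ1, ?_, ?_⟩
    · intro k i hi j hj
      simp [hξ2 k i hi j hj]
    · intro j hj
      simp [hξ3 j hj]
  · rintro ξ ⟨hξ1, hξ2, hξ3⟩ η ⟨hη1, hη2, hη3⟩
    refine ⟨inS_mul hξ1 hη1, ?_, ?_⟩
    · intro k i hi j hj
      simp [Pi.mul_apply, hξ2 k i hi j hj, hη2 k i hi j hj]
    · intro j hj
      simp [Pi.mul_apply, hξ3 j hj]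
  · rintro ξ ⟨hξ1, hξ2, hξ3⟩
    refine ⟨inS_star hξ1, ?_, ?_⟩
    · intro k i hi j hj
      simp [Pi.star_apply, hξ2 k i hi j hj]
    · intro j hj
      simp [Pi.star_apply, hξ3 j hj]

lemma gen_subset_good (N : ℕ → Finset ℕ)
    (hdisj : ∀ k l, k ≠ l → Disjoint (N k) (N l)) :
    genStarSubalg N ⊆ goodSet N :=
  Set.sInter_subset_of_mem (goodSet_mem_family N hdisj)

lemma apply_le_sNorm_zero {ζ : ℕ → ℂ} (hζ : inS ζ) (j : ℕ) : ‖ζ j‖ ≤ sNorm 0 ζ := by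
  have h1 : ‖ζ j‖ ^ 2 * ((j : ℝ) + 1) ^ (2 * 0) ≤
      ∑' i : ℕ, ‖ζ i‖ ^ 2 * ((i : ℝ) + 1) ^ (2 * 0) :=
    Summable.le_tsum (hζ 0) j (fun i _ => by positivity)
  have h2 : ‖ζ j‖ ^ 2 ≤ ∑' i : ℕ, ‖ζ i‖ ^ 2 * ((i : ℝ) + 1) ^ (2 * 0) := by
    simpa using h1
  calc ‖ζ j‖ = Real.sqrt (‖ζ j‖ ^ 2) := by
        rw [Real.sqrt_sq (norm_nonneg _)]
    _ ≤ sNorm 0 ζ := Real.sqrt_le_sqrt h2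

lemma sum_mem_gen (N : ℕ → Finset ℕ) (c : ℕ → ℂ) (m : ℕ) :
    (∑ k ∈ Finset.range m, c k • eNset (N k)) ∈ genStarSubalg N := by
  refine Set.mem_sInter.mpr fun T hT => ?_
  obtain ⟨h1, -, hadd, hsmul, -, -⟩ := hT
  induction m with
  | zero =>
    have : ((0:ℂ) • eNset (N 0)) ∈ T := hsmul 0 _ (h1 0)
    simpa using this
  | succ n ih =>
    rw [Finset.sum_range_succ]
    exact hadd _ ih _ (hsmul _ _ (h1 n))

/-- Let `{N_k}` be finite nonempty pairwise disjoint subsets of `ℕ`, and let `F` be the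
closure in `s` (w.r.t. the norms `|·|_q`) of the *-subalgebra generated by the `e_{N_k}`.
Then `F` consists exactly of those `ξ ∈ s` that are constant on each `N_k` and vanish
off `⋃_k N_k`. -/
theorem stmt_5 (N : ℕ → Finset ℕ) (hne : ∀ k, (N k).Nonempty)
    (hdisj : ∀ k l, k ≠ l → Disjoint (N k) (N l)) :
    {ξ : ℕ → ℂ | inS ξ ∧
        ∀ q : ℕ, ∀ ε : ℝ, 0 < ε → ∃ η ∈ genStarSubalg N, sNorm q (ξ - η) < ε} =
      {ξ : ℕ → ℂ | inS ξ ∧ (∀ k, ∀ i ∈ N k, ∀ j ∈ N k, ξ i = ξ j) ∧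
        (∀ j : ℕ, (∀ k, j ∉ N k) → ξ j = 0)} := by
  ext ξ
  constructor
  · -- forward inclusion
    rintro ⟨hξS, happ⟩
    refine ⟨hξS, ?_, ?_⟩
    · intro k i hi j hj
      have key : ∀ ε : ℝ, 0 < ε → ‖ξ i - ξ j‖ ≤ 2 * ε := by
        intro ε hε
        obtain ⟨η, hηmem, hηε⟩ := happ 0 ε hε
        have hηgood : η ∈ goodSet N := gen_subset_good N hdisj hηmem
        have hsub : inS (ξ - η) := inS_sub hξS hηgood.1
        have hi' : ‖ξ i - η i‖ ≤ sNorm 0 (ξ - η) := by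
          simpa using apply_le_sNorm_zero hsub i
        have hj' : ‖ξ j - η j‖ ≤ sNorm 0 (ξ - η) := by
          simpa using apply_le_sNorm_zero hsub j
        have heq : η i = η j := hηgood.2.1 k i hi j hj
        have : ξ i - ξ j = (ξ i - η i) - (ξ j - η j) := by rw [heq]; ring
        rw [this]
        calc ‖(ξ i - η i) - (ξ j - η j)‖ ≤ ‖ξ i - η i‖ + ‖ξ j - η j‖ := norm_sub_le _ _
          _ ≤ sNorm 0 (ξ - η) + sNorm 0 (ξ - η) := add_le_add hi' hj'
          _ ≤ 2 * ε := by linarith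
      have h0 : ‖ξ i - ξ j‖ ≤ 0 := by
        by_contra h
        push_neg at h
        have := key (‖ξ i - ξ j‖ / 4) (by linarith)
        linarith
      have := norm_le_zero_iff.mp h0
      exact sub_eq_zero.mp this
    · intro j hj
      have key : ∀ ε : ℝ, 0 < ε → ‖ξ j‖ ≤ ε := by
        intro ε hε
        obtain ⟨η, hηmem, hηε⟩ := happ 0 ε hε
        have hηgood : η ∈ goodSet N := gen_subset_good N hdisj hηmem
        have hsub : inS (ξ - η) := inS_sub hξS hηgood.1
        have hj' : ‖ξ j - η j‖ ≤ sNorm 0 (ξ - η) := by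
          simpa using apply_le_sNorm_zero hsub j
        have hη0 : η j = 0 := hηgood.2.2 j hj
        rw [show ξ j = ξ j - η j by rw [hη0]; ring]
        linarith
      have h0 : ‖ξ j‖ ≤ 0 := by
        by_contra h
        push_neg at h
        have := key (‖ξ j‖ / 2) (by linarith)
        linarith
      exact norm_le_zero_iff.mp h0
  · -- reverse inclusion
    rintro ⟨hξS, hconst, hvan⟩
    refine ⟨hξS, ?_⟩
    intro q ε hε
    set c : ℕ → ℂ := fun k => ξ (hne k).choose with hc
    set η : ℕ → ℕ → ℂ := fun m => ∑ k ∈ Finset.range m, c k • eNset (N k) with hη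
    -- pointwise description of `ξ - η m`
    have hval0 : ∀ m k₀ j, j ∈ N k₀ → k₀ < m → (ξ - η m) j = 0 := by
      intro m k₀ j hjk hk₀m
      have hηval : η m j = c k₀ := by
        have : η m j = ∑ k ∈ Finset.range m, c k * (if j ∈ N k then 1 else 0) := by
          simp [hη, eNset, Finset.sum_apply]
        rw [this]
        rw [Finset.sum_eq_single_of_mem k₀ (Finset.mem_range.mpr hk₀m)]
        · simp [hjk]
        · intro k _ hk
          have : j ∉ N k := Finset.disjoint_left.mp (hdisj k₀ k (Ne.symm hk)) hjk
          simp [this]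
      have hξval : ξ j = c k₀ := hconst k₀ j hjk _ (hne k₀).choose_spec
      simp [Pi.sub_apply, hηval, hξval]
    have hval1 : ∀ m j, (∀ k, k < m → j ∉ N k) → (ξ - η m) j = ξ j := by
      intro m j hjm
      have hηval : η m j = 0 := by
        have : η m j = ∑ k ∈ Finset.range m, c k * (if j ∈ N k then 1 else 0) := by
          simp [hη, eNset, Finset.sum_apply]
        rw [this]
        refine Finset.sum_eq_zero fun k hk => ?_
        simp [hjm k (Finset.mem_range.mp hk)]
      simp [Pi.sub_apply, hηval]
    -- dominated convergence
    set g : ℕ → ℕ → ℝ :=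
      fun m j => ‖(ξ - η m) j‖ ^ 2 * ((j : ℝ) + 1) ^ (2 * q) with hg
    set f : ℕ → ℝ := fun j => ‖ξ j‖ ^ 2 * ((j : ℝ) + 1) ^ (2 * q) with hf
    have hbound : ∀ m j, ‖g m j‖ ≤ f j := by
      intro m j
      rw [Real.norm_of_nonneg (by positivity)]
      by_cases hjcase : ∃ k, k < m ∧ j ∈ N k
      · obtain ⟨k, hk, hjk⟩ := hjcase
        rw [hg]
        simp only
        rw [hval0 m k j hjk hk]
        simp [hf]
        positivity
      · push_neg at hjcase
        rw [hg]
        simp only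
        rw [hval1 m j hjcase]
    have hlim : ∀ j, Filter.Tendsto (fun m => g m j) Filter.atTop (nhds 0) := by
      intro j
      have hev : ∀ᶠ m in Filter.atTop, (fun _ => (0:ℝ)) m = g m j := by
        by_cases hjcase : ∃ k, j ∈ N k
        · obtain ⟨k, hjk⟩ := hjcase
          filter_upwards [Filter.eventually_ge_atTop (k + 1)] with m hm
          rw [hg]
          simp only
          rw [hval0 m k j hjk (by omega)]
          simp
        · push_neg at hjcase
          have hξ0 : ξ j = 0 := hvan j hjcase
          filter_upwards with m
          rw [hg]
          simp only
          rw [hval1 m j (fun k _ => hjcase k), hξ0]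
          simp
      exact Filter.Tendsto.congr' hev tendsto_const_nhds
    have hdom : Filter.Tendsto (fun m => ∑' j : ℕ, g m j) Filter.atTop (nhds 0) := by
      have := tendsto_tsum_of_dominated_convergence (f := g) (g := fun _ => (0:ℝ))
        (bound := f) (hξS q) hlim (Filter.Eventually.of_forall fun m => hbound m)
      simpa using this
    have hsq : Filter.Tendsto (fun m => sNorm q (ξ - η m)) Filter.atTop (nhds 0) := by
      have hcont : Filter.Tendsto (fun m => Real.sqrt (∑' j : ℕ, g m j))
          Filter.atTop (nhds (Real.sqrt 0)) :=
        (Real.continuous_sqrt.tendsto 0).comp hdom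
      rw [Real.sqrt_zero] at hcont
      exact hcont
    obtain ⟨m, hm⟩ := (hsq.eventually (gt_mem_nhds hε)).exists
    exact ⟨η m, sum_mem_gen N c m, hm⟩

end
end

section
/- Every infinite-dimensional closed *-subalgebra E of s is isomorphic, as a topological *-algebra (i.e. via a bijective ℂ-algebra homomorphism preserving complex conjugation which is a homeomorphism), to the Köthe algebra λ^∞(n_k^q) := {ξ ∈ ℂ^ℕ : sup_{k∈ℕ} |ξ_k| n_k^q < ∞ for all q ∈ ℕ₀} for some strictly increasing sequence (n_k)_{k∈ℕ} of natural numbers. -/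
noncomputable section

/-- The Köthe algebra `λ^∞(n_k^q)` for a sequence `(n_k)` of positive integers. -/
def lambdaN (n : ℕ → ℕ) : Set (ℕ → ℂ) :=
  {ξ | ∀ q : ℕ, ∃ C : ℝ, ∀ k : ℕ, ‖ξ k‖ * (n k : ℝ) ^ q ≤ C}

/-- The `q`-th norm `ξ ↦ sup_k |ξ_k| n_k^q` on `λ^∞(n_k^q)`. -/
def kNorm (n : ℕ → ℕ) (q : ℕ) (ξ : ℕ → ℂ) : ℝ :=
  ⨆ k : ℕ, ‖ξ k‖ * (n k : ℝ) ^ q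

/-!
Let `A` be the closed *-subalgebra. For `ζ ∈ A` and `c ≠ 0` the indicator of `{ζ = c}` lies in
`A`: it is the limit in `s` of `(ζ / c) * g ^ m`, where `g = 1 - |ζ - c|² / D` (with
`D > sup |ζ - c|²`) is a scalar plus an element of `A`, satisfies `0 < g ≤ 1`, and equals `1`
exactly on `{ζ = c}`. Multiplying finitely many such indicators, `A` contains the indicator of
every class of the relation "all elements of `A` agree at `i` and `j`" on the support of `A`;
these classes are finite since elements of `s` tend to `0`. Enumerate the classes by their maxima
`r₀ < r₁ < ⋯` and put `n_k = r_k + 1`. Restriction `ξ ↦ (ξ (r_k))_k` is then the isomorphism: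
its inverse sends `c ∈ λ^∞(n_k^q)` to `∑ c_k 1_{class k}`, which converges in `s` because
`j < n_k` on the `k`-th class, and the same inequality gives
`|ξ|_p ≤ C sup_k |ξ (r_k)| n_k^(p+1)`.
-/

open Filter Topology

theorem inS.tendsto_cofinite_zero {ξ : ℕ → ℂ} (h : inS ξ) : Tendsto ξ cofinite (𝓝 0) := by
  have hsq := (h 0).tendsto_cofinite_zero.sqrt
  simp only [mul_zero, pow_zero, mul_one, Real.sqrt_sq (norm_nonneg _), Real.sqrt_zero] at hsq
  exact tendsto_zero_iff_norm_tendsto_zero.mpr hsq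

theorem inS.finite_setOf_eq {ξ : ℕ → ℂ} (h : inS ξ) {c : ℂ} (hc : c ≠ 0) :
    {j | ξ j = c}.Finite := by
  simpa [eventually_cofinite] using h.tendsto_cofinite_zero.eventually (isOpen_ne.mem_nhds hc.symm)

theorem inS.of_norm_le {ξ η : ℕ → ℂ} (hη : inS η) (h : ∀ j, ‖ξ j‖ ≤ ‖η j‖) : inS ξ :=
  fun q => (hη q).of_nonneg_of_le (fun j => by positivity) fun j => by gcongr; exact h j

theorem norm_mul_pow_le_sNorm {ξ : ℕ → ℂ} (h : inS ξ) (q j : ℕ) :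
    ‖ξ j‖ * ((j : ℝ) + 1) ^ q ≤ sNorm q ξ := by
  refine Real.le_sqrt_of_sq_le ?_
  calc (‖ξ j‖ * ((j : ℝ) + 1) ^ q) ^ 2 = ‖ξ j‖ ^ 2 * ((j : ℝ) + 1) ^ (2 * q) := by ring
    _ ≤ _ := (h q).le_tsum j fun i _ => by positivity

theorem summable_inv_succ_sq : Summable fun j : ℕ => (((j : ℝ) + 1) ^ 2)⁻¹ := by
  have h := (summable_nat_add_iff 1).mpr (Real.summable_nat_pow_inv.mpr one_lt_two)
  exact_mod_cast h

theorem sq_norm_mul_pow_le_of_forall_le {ξ : ℕ → ℂ} {K : ℝ} {q : ℕ}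
    (h : ∀ j, ‖ξ j‖ * ((j : ℝ) + 1) ^ (q + 1) ≤ K) (j : ℕ) :
    ‖ξ j‖ ^ 2 * ((j : ℝ) + 1) ^ (2 * q) ≤ K ^ 2 * (((j : ℝ) + 1) ^ 2)⁻¹ := by
  rw [le_mul_inv_iff₀ (by positivity)]
  calc ‖ξ j‖ ^ 2 * ((j : ℝ) + 1) ^ (2 * q) * ((j : ℝ) + 1) ^ 2
      = (‖ξ j‖ * ((j : ℝ) + 1) ^ (q + 1)) ^ 2 := by ring
    _ ≤ K ^ 2 := pow_le_pow_left₀ (by positivity) (h j) 2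

theorem summable_of_forall_norm_mul_pow_le {ξ : ℕ → ℂ} {K : ℝ} {q : ℕ}
    (h : ∀ j, ‖ξ j‖ * ((j : ℝ) + 1) ^ (q + 1) ≤ K) :
    Summable fun j : ℕ => ‖ξ j‖ ^ 2 * ((j : ℝ) + 1) ^ (2 * q) :=
  (summable_inv_succ_sq.mul_left (K ^ 2)).of_nonneg_of_le (fun j => by positivity)
    (sq_norm_mul_pow_le_of_forall_le h)

theorem inS_of_forall_exists_le {ξ : ℕ → ℂ}
    (h : ∀ q, ∃ K, ∀ j, ‖ξ j‖ * ((j : ℝ) + 1) ^ q ≤ K) : inS ξ := fun q =>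
  let ⟨_, hK⟩ := h (q + 1)
  summable_of_forall_norm_mul_pow_le hK

theorem sNorm_le_of_forall_le {ξ : ℕ → ℂ} {K : ℝ} {q : ℕ}
    (h : ∀ j, ‖ξ j‖ * ((j : ℝ) + 1) ^ (q + 1) ≤ K) :
    sNorm q ξ ≤ K * √(∑' j : ℕ, (((j : ℝ) + 1) ^ 2)⁻¹) := by
  have hK : 0 ≤ K := le_trans (by positivity) (h 0)
  calc sNorm q ξ ≤ √(∑' j : ℕ, K ^ 2 * (((j : ℝ) + 1) ^ 2)⁻¹) :=
        Real.sqrt_le_sqrt <| (summable_of_forall_norm_mul_pow_le h).tsum_le_tsum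
          (sq_norm_mul_pow_le_of_forall_le h) (summable_inv_succ_sq.mul_left (K ^ 2))
    _ = K * √(∑' j : ℕ, (((j : ℝ) + 1) ^ 2)⁻¹) := by
        rw [tsum_mul_left, Real.sqrt_mul (sq_nonneg K), Real.sqrt_sq hK]

theorem tendsto_sNorm_sub_zero {χ η : ℕ → ℂ} (hη : inS η) {f : ℕ → ℕ → ℂ}
    (hχ : ∀ j, ‖χ j‖ ≤ ‖η j‖) (hf : ∀ m j, ‖f m j‖ ≤ ‖η j‖)
    (hlim : ∀ j, Tendsto (fun m => f m j) atTop (𝓝 (χ j))) (q : ℕ) :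
    Tendsto (fun m => sNorm q (χ - f m)) atTop (𝓝 0) := by
  have hsum : Tendsto (fun m => ∑' j, ‖(χ - f m) j‖ ^ 2 * ((j : ℝ) + 1) ^ (2 * q))
      atTop (𝓝 (∑' _ : ℕ, (0 : ℝ))) := by
    refine tendsto_tsum_of_dominated_convergence ((hη q).mul_left 4) (fun j => ?_)
      (Eventually.of_forall fun m j => ?_)
    · have hj := ((tendsto_const_nhds (x := χ j)).sub (hlim j)).norm
      simpa using (hj.pow 2).mul_const (((j : ℝ) + 1) ^ (2 * q))
    · have hdiff : ‖(χ - f m) j‖ ≤ 2 * ‖η j‖ :=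
        (norm_sub_le _ _).trans (by linarith [hχ j, hf m j])
      rw [Real.norm_of_nonneg (by positivity)]
      calc _ ≤ (2 * ‖η j‖) ^ 2 * ((j : ℝ) + 1) ^ (2 * q) := by gcongr
        _ = _ := by ring
  simpa [sNorm] using hsum.sqrt

def IsClosedInS (E : Set (ℕ → ℂ)) : Prop :=
  ∀ ξ, inS ξ → (∀ q : ℕ, ∀ ε : ℝ, 0 < ε → ∃ η ∈ E, sNorm q (ξ - η) < ε) → ξ ∈ E

theorem IsClosedInS.mem_of_tendsto {E : Set (ℕ → ℂ)} (hE : IsClosedInS E) {χ η : ℕ → ℂ}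
    (hη : inS η) {f : ℕ → ℕ → ℂ} (hfE : ∀ m, f m ∈ E) (hf : ∀ m j, ‖f m j‖ ≤ ‖η j‖)
    (hlim : ∀ j, Tendsto (fun m => f m j) atTop (𝓝 (χ j))) : χ ∈ E := by
  have hχ : ∀ j, ‖χ j‖ ≤ ‖η j‖ := fun j => le_of_tendsto' (hlim j).norm (fun m => hf m j)
  refine hE χ (hη.of_norm_le hχ) fun q ε hε => ?_
  obtain ⟨m, hm⟩ := ((tendsto_sNorm_sub_zero hη hχ hf hlim q).eventually (gt_mem_nhds hε)).exists
  exact ⟨f m, hfE m, hm⟩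

namespace ClosedSubalgebraS

variable {A : NonUnitalStarSubalgebra ℂ (ℕ → ℂ)}

theorem mul_smul_one_add_pow_mem {ξ w : ℕ → ℂ} (hξ : ξ ∈ A) (hw : w ∈ A) (a : ℂ) (m : ℕ) :
    ξ * (a • 1 + w) ^ m ∈ A := by
  induction m with
  | zero => simpa using hξ
  | succ m ih =>
    rw [pow_succ, ← mul_assoc, mul_add, mul_smul_comm, mul_one]
    exact add_mem (SMulMemClass.smul_mem a ih) (mul_mem ih hw)

open ComplexConjugate in
theorem indicator_setOf_eq_mem (hAs : ∀ ξ ∈ A, inS ξ) (hA : IsClosedInS A) {ζ : ℕ → ℂ}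
    (hζ : ζ ∈ A) {c : ℂ} (hc : c ≠ 0) : {j | ζ j = c}.indicator 1 ∈ A := by
  set D : ℝ := (sNorm 0 ζ + ‖c‖) ^ 2 + 1
  have hDpos : 0 < D := by positivity
  have hD : ∀ j, ‖ζ j - c‖ ^ 2 / D < 1 := fun j => by
    have hζj : ‖ζ j‖ ≤ sNorm 0 ζ := by simpa using norm_mul_pow_le_sNorm (hAs ζ hζ) 0 j
    have : ‖ζ j - c‖ ≤ sNorm 0 ζ + ‖c‖ := (norm_sub_le _ _).trans (by linarith)
    rw [div_lt_one hDpos]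
    nlinarith [norm_nonneg (ζ j - c)]
  set w : ℕ → ℂ := ((D⁻¹ : ℝ) : ℂ) • (conj c • ζ + c • star ζ - ζ * star ζ)
  have hwA : w ∈ A := SMulMemClass.smul_mem _ <| sub_mem
    (add_mem (SMulMemClass.smul_mem _ hζ) (SMulMemClass.smul_mem _ (star_mem hζ)))
    (mul_mem hζ (star_mem hζ))
  set g : ℕ → ℂ := ((1 - ‖c‖ ^ 2 / D : ℝ) : ℂ) • 1 + w
  have hg : ∀ j, g j = ((1 - ‖ζ j - c‖ ^ 2 / D : ℝ) : ℂ) := fun j => by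
    simp only [g, w, Pi.add_apply, Pi.smul_apply, Pi.sub_apply, Pi.mul_apply, Pi.star_apply,
      Pi.one_apply, smul_eq_mul, RCLike.star_def]
    push_cast
    rw [← Complex.mul_conj', ← Complex.mul_conj', map_sub]
    field_simp
    ring
  have hg_norm : ∀ j, ‖g j‖ = 1 - ‖ζ j - c‖ ^ 2 / D := fun j => by
    rw [hg, Complex.norm_real, Real.norm_of_nonneg (by linarith [hD j])]
  have hg_le : ∀ j, ‖g j‖ ≤ 1 := fun j => by
    rw [hg_norm]
    exact sub_le_self 1 (by positivity)
  have hg_lt : ∀ j, ζ j ≠ c → ‖g j‖ < 1 := fun j hj => by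
    rw [hg_norm]
    exact sub_lt_self 1 (div_pos (pow_pos (norm_pos_iff.mpr (sub_ne_zero.mpr hj)) 2) hDpos)
  have hζc : c⁻¹ • ζ ∈ A := SMulMemClass.smul_mem _ hζ
  refine hA.mem_of_tendsto (hAs _ hζc) (f := fun m => (c⁻¹ • ζ) * g ^ m)
    (fun m => mul_smul_one_add_pow_mem hζc hwA _ m) (fun m j => ?_) (fun j => ?_)
  · simp only [Pi.mul_apply, Pi.pow_apply, norm_mul, norm_pow]
    exact mul_le_of_le_one_right (norm_nonneg _) (pow_le_one₀ (norm_nonneg _) (hg_le j))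
  · by_cases hj : ζ j = c
    · have hgj : g j = 1 := by simp [hg, hj]
      simp [hgj, hj, hc]
    · rw [Set.indicator_of_notMem (show j ∉ {j | ζ j = c} from hj)]
      simpa using ((tendsto_pow_atTop_nhds_zero_of_norm_lt_one (hg_lt j hj)).const_mul
        (c⁻¹ * ζ j))

theorem mul_prod_mem {ι : Type*} {ξ : ℕ → ℂ} (hξ : ξ ∈ A) {s : Finset ι} {f : ι → ℕ → ℂ}
    (hf : ∀ i ∈ s, f i ∈ A) : ξ * ∏ i ∈ s, f i ∈ A := by
  classical
  induction s using Finset.induction_on with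
  | empty => simpa using hξ
  | insert i s hi ih =>
    rw [Finset.prod_insert hi, mul_left_comm]
    exact mul_mem (hf i (Finset.mem_insert_self i s))
      (ih fun j hj => hf j (Finset.mem_insert_of_mem hj))

variable (A) in
def supp : Set ℕ := {j | ∃ ξ ∈ A, ξ j ≠ 0}

variable (A) in
def cls (m : ℕ) : Set ℕ := {i | ∀ ξ ∈ A, ξ i = ξ m}

theorem mem_cls_self (m : ℕ) : m ∈ cls A m := fun _ _ => rfl

theorem mem_cls_comm {i m : ℕ} : i ∈ cls A m ↔ m ∈ cls A i :=
  ⟨fun h ξ hξ => (h ξ hξ).symm, fun h ξ hξ => (h ξ hξ).symm⟩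

theorem cls_eq_of_mem {i m : ℕ} (h : i ∈ cls A m) : cls A i = cls A m := by
  ext a
  exact ⟨fun ha ξ hξ => (ha ξ hξ).trans (h ξ hξ), fun ha ξ hξ => (ha ξ hξ).trans (h ξ hξ).symm⟩

theorem mem_supp_of_mem_cls {i m : ℕ} (h : i ∈ cls A m) (hm : m ∈ supp A) : i ∈ supp A := by
  obtain ⟨ξ, hξ, hξm⟩ := hm
  exact ⟨ξ, hξ, h ξ hξ ▸ hξm⟩

theorem eq_zero_of_notMem_supp {ξ : ℕ → ℂ} (hξ : ξ ∈ A) {j : ℕ} (hj : j ∉ supp A) : ξ j = 0 :=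
  not_not.mp fun h => hj ⟨ξ, hξ, h⟩

theorem cls_finite (hAs : ∀ ξ ∈ A, inS ξ) {m : ℕ} (hm : m ∈ supp A) : (cls A m).Finite := by
  obtain ⟨ξ, hξ, hξm⟩ := hm
  exact ((hAs ξ hξ).finite_setOf_eq hξm).subset fun i hi => hi ξ hξ

theorem exists_separating {ζ : ℕ → ℂ} (hζ : ζ ∈ A) {m : ℕ} (hζm : ζ m = 1) (i : ℕ) :
    ∃ η ∈ A, η m = 1 ∧ (η i = 1 → i ∈ cls A m) := by
  by_cases hi : i ∈ cls A m
  · exact ⟨ζ, hζ, hζm, fun _ => hi⟩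
  by_cases hζi : ζ i = 1
  · obtain ⟨ξ, hξ, hξi⟩ : ∃ ξ ∈ A, ξ i ≠ ξ m := by simpa [cls] using hi
    -- shifting by a multiple of `ζ` makes the value at `m` equal to `1` and keeps `ξ i - ξ m`
    refine ⟨ξ + (1 - ξ m) • ζ, add_mem hξ (SMulMemClass.smul_mem _ hζ), ?_, fun h => ?_⟩
    · simp [hζm]
    · simp only [Pi.add_apply, Pi.smul_apply, smul_eq_mul, hζi] at h
      exact absurd (by linear_combination h) hξi
  · exact ⟨ζ, hζ, hζm, fun h => absurd h hζi⟩

theorem indicator_cls_mem (hAs : ∀ ξ ∈ A, inS ξ) (hA : IsClosedInS A) {m : ℕ}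
    (hm : m ∈ supp A) : (cls A m).indicator 1 ∈ A := by
  obtain ⟨ξ, hξ, hξm⟩ := hm
  set ζ := (ξ m)⁻¹ • ξ
  have hζ : ζ ∈ A := SMulMemClass.smul_mem _ hξ
  have hζm : ζ m = 1 := by simp [ζ, hξm]
  have hF := (hAs ζ hζ).finite_setOf_eq one_ne_zero
  choose η hηA hηm hηcls using exists_separating hζ hζm
  have hind : (cls A m).indicator 1 = {j | ζ j = 1}.indicator 1 *
      ∏ i ∈ hF.toFinset, {j | η i j = 1}.indicator (1 : ℕ → ℂ) := by
    ext j
    simp only [Pi.mul_apply, Finset.prod_apply]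
    by_cases hj : j ∈ cls A m
    · have hζj : j ∈ {j | ζ j = 1} := (hj ζ hζ).trans hζm
      rw [Set.indicator_of_mem hj, Set.indicator_of_mem hζj, Finset.prod_eq_one fun i _ =>
        Set.indicator_of_mem (show j ∈ {j | η i j = 1} from (hj _ (hηA i)).trans (hηm i)) _]
      simp
    · rw [Set.indicator_of_notMem hj]
      by_cases hζj : ζ j = 1
      · rw [Finset.prod_eq_zero (f := fun i => {j' | η i j' = 1}.indicator (1 : ℕ → ℂ) j)
          (hF.mem_toFinset.mpr hζj)
          (Set.indicator_of_notMem (show j ∉ {j' | η j j' = 1} from fun h => hj (hηcls j h)) _),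
          mul_zero]
      · rw [Set.indicator_of_notMem (show j ∉ {j | ζ j = 1} from hζj), zero_mul]
  rw [hind]
  exact mul_prod_mem (indicator_setOf_eq_mem hAs hA hζ one_ne_zero)
    fun i _ => indicator_setOf_eq_mem hAs hA (hηA i) one_ne_zero


variable (A) in
def clsMax (j : ℕ) : ℕ := sSup (cls A j)

variable (A) in
def maxima : Set ℕ := {m ∈ supp A | clsMax A m = m}

variable (A) in
def rep (k : ℕ) : ℕ := Nat.nth (· ∈ maxima A) k

open Classical in
variable (A) in
def idx (j : ℕ) : ℕ := Nat.count (· ∈ maxima A) (clsMax A j)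

theorem clsMax_mem_cls (hAs : ∀ ξ ∈ A, inS ξ) {j : ℕ} (hj : j ∈ supp A) :
    clsMax A j ∈ cls A j :=
  Nat.sSup_mem ⟨j, mem_cls_self j⟩ (cls_finite hAs hj).bddAbove

theorem le_clsMax (hAs : ∀ ξ ∈ A, inS ξ) {i j : ℕ} (hj : j ∈ supp A) (hi : i ∈ cls A j) :
    i ≤ clsMax A j :=
  le_csSup (cls_finite hAs hj).bddAbove hi

theorem clsMax_eq_of_mem {i j : ℕ} (h : i ∈ cls A j) : clsMax A i = clsMax A j := by
  rw [clsMax, clsMax, cls_eq_of_mem h]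

theorem clsMax_mem_maxima (hAs : ∀ ξ ∈ A, inS ξ) {j : ℕ} (hj : j ∈ supp A) :
    clsMax A j ∈ maxima A :=
  ⟨mem_supp_of_mem_cls (clsMax_mem_cls hAs hj) hj, clsMax_eq_of_mem (clsMax_mem_cls hAs hj)⟩

theorem maxima_infinite (hAs : ∀ ξ ∈ A, inS ξ) (hsupp : (supp A).Infinite) :
    (maxima A).Infinite := fun hmax => hsupp <|
  (hmax.biUnion fun _ hm => cls_finite hAs hm.1).subset fun _ hj =>
    Set.mem_biUnion (clsMax_mem_maxima hAs hj) (mem_cls_comm.mp (clsMax_mem_cls hAs hj))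

theorem rep_mem_maxima (hmax : (maxima A).Infinite) (k : ℕ) : rep A k ∈ maxima A :=
  Nat.nth_mem_of_infinite hmax k

theorem rep_strictMono (hmax : (maxima A).Infinite) : StrictMono (rep A) :=
  Nat.nth_strictMono hmax

open Classical in
theorem rep_idx (hAs : ∀ ξ ∈ A, inS ξ) {j : ℕ} (hj : j ∈ supp A) :
    rep A (idx A j) = clsMax A j :=
  Nat.nth_count (clsMax_mem_maxima hAs hj)

open Classical in
theorem idx_rep (hmax : (maxima A).Infinite) (k : ℕ) : idx A (rep A k) = k := by
  rw [idx, (rep_mem_maxima hmax k).2]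
  exact Nat.count_nth_of_infinite (p := (· ∈ maxima A)) hmax k

theorem mem_cls_rep_idx (hAs : ∀ ξ ∈ A, inS ξ) {j : ℕ} (hj : j ∈ supp A) :
    j ∈ cls A (rep A (idx A j)) := by
  rw [rep_idx hAs hj]
  exact mem_cls_comm.mp (clsMax_mem_cls hAs hj)

theorem le_rep_idx (hAs : ∀ ξ ∈ A, inS ξ) {j : ℕ} (hj : j ∈ supp A) : j ≤ rep A (idx A j) := by
  rw [rep_idx hAs hj]
  exact le_clsMax hAs hj (mem_cls_self j)

theorem mem_cls_rep_iff (hAs : ∀ ξ ∈ A, inS ξ) (hmax : (maxima A).Infinite) {j k : ℕ} :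
    j ∈ cls A (rep A k) ↔ j ∈ supp A ∧ idx A j = k := by
  refine ⟨fun h => ⟨mem_supp_of_mem_cls h (rep_mem_maxima hmax k).1, ?_⟩, ?_⟩
  · rw [← idx_rep hmax k, idx, idx, clsMax_eq_of_mem h]
  · rintro ⟨hj, rfl⟩
    exact mem_cls_rep_idx hAs hj

theorem norm_comp_rep_mul_le_sNorm (hAs : ∀ ξ ∈ A, inS ξ) {ξ : ℕ → ℂ} (hξ : ξ ∈ A) (q k : ℕ) :
    ‖(ξ ∘ rep A) k‖ * ((rep A k + 1 : ℕ) : ℝ) ^ q ≤ sNorm q ξ := by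
  push_cast
  exact norm_mul_pow_le_sNorm (hAs ξ hξ) q _

theorem comp_rep_mem_lambdaN (hAs : ∀ ξ ∈ A, inS ξ) {ξ : ℕ → ℂ} (hξ : ξ ∈ A) :
    ξ ∘ rep A ∈ lambdaN fun k => rep A k + 1 :=
  fun q => ⟨sNorm q ξ, norm_comp_rep_mul_le_sNorm hAs hξ q⟩

theorem kNorm_comp_rep_le_sNorm (hAs : ∀ ξ ∈ A, inS ξ) {ξ : ℕ → ℂ} (hξ : ξ ∈ A) (q : ℕ) :
    kNorm (fun k => rep A k + 1) q (ξ ∘ rep A) ≤ sNorm q ξ :=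
  ciSup_le (norm_comp_rep_mul_le_sNorm hAs hξ q)

theorem norm_mul_pow_le_kNorm_comp_rep (hAs : ∀ ξ ∈ A, inS ξ) {ξ : ℕ → ℂ} (hξ : ξ ∈ A)
    (q j : ℕ) : ‖ξ j‖ * ((j : ℝ) + 1) ^ q ≤ kNorm (fun k => rep A k + 1) q (ξ ∘ rep A) := by
  by_cases hj : j ∈ supp A
  · calc ‖ξ j‖ * ((j : ℝ) + 1) ^ q
        ≤ ‖(ξ ∘ rep A) (idx A j)‖ * ((rep A (idx A j) + 1 : ℕ) : ℝ) ^ q := by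
          rw [Function.comp_apply, ← mem_cls_rep_idx hAs hj ξ hξ]
          push_cast
          gcongr
          exact_mod_cast le_rep_idx hAs hj
      _ ≤ _ := le_ciSup ⟨sNorm q ξ, Set.forall_mem_range.mpr
          (norm_comp_rep_mul_le_sNorm hAs hξ q)⟩ (idx A j)
  · rw [eq_zero_of_notMem_supp hξ hj, norm_zero, zero_mul]
    exact Real.iSup_nonneg fun k => by positivity

theorem eq_of_comp_rep_eq (hAs : ∀ ξ ∈ A, inS ξ) {ξ η : ℕ → ℂ} (hξ : ξ ∈ A) (hη : η ∈ A)
    (h : ξ ∘ rep A = η ∘ rep A) : ξ = η := by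
  funext j
  by_cases hj : j ∈ supp A
  · rw [mem_cls_rep_idx hAs hj ξ hξ, mem_cls_rep_idx hAs hj η hη]
    exact congrFun h _
  · rw [eq_zero_of_notMem_supp hξ hj, eq_zero_of_notMem_supp hη hj]

open Classical in
theorem exists_mem_comp_rep_eq (hAs : ∀ ξ ∈ A, inS ξ) (hA : IsClosedInS A)
    (hmax : (maxima A).Infinite) {c : ℕ → ℂ} (hc : c ∈ lambdaN fun k => rep A k + 1) :
    ∃ ξ ∈ A, ξ ∘ rep A = c := by
  set χ : ℕ → ℂ := fun j => if j ∈ supp A then c (idx A j) else 0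
  have hχ : ∀ q, ∃ K, ∀ j, ‖χ j‖ * ((j : ℝ) + 1) ^ q ≤ K := fun q => by
    obtain ⟨C, hC⟩ := hc q
    refine ⟨C, fun j => ?_⟩
    by_cases hj : j ∈ supp A
    · calc ‖χ j‖ * ((j : ℝ) + 1) ^ q ≤ ‖c (idx A j)‖ * ((rep A (idx A j) + 1 : ℕ) : ℝ) ^ q := by
            simp only [χ, if_pos hj]
            push_cast
            gcongr
            exact_mod_cast le_rep_idx hAs hj
        _ ≤ C := hC _
    · simpa [χ, hj] using (by positivity : (0 : ℝ) ≤ ‖c 0‖ * _).trans (hC 0)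
  set f : ℕ → ℕ → ℂ := fun L => ∑ k ∈ Finset.range L, c k • (cls A (rep A k)).indicator 1
  have hf : ∀ L j, f L j = if j ∈ supp A ∧ idx A j < L then c (idx A j) else 0 := by
    intro L j
    by_cases hj : j ∈ supp A
    · simp [f, Finset.sum_apply, Set.indicator_apply, mem_cls_rep_iff hAs hmax, hj]
    · simp [f, Finset.sum_apply, mem_cls_rep_iff hAs hmax, hj]
  refine ⟨χ, hA.mem_of_tendsto (inS_of_forall_exists_le hχ) (f := f) (fun L => sum_mem fun k _ =>
    SMulMemClass.smul_mem _ (indicator_cls_mem hAs hA (rep_mem_maxima hmax k).1))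
    (fun L j => ?_) (fun j => ?_), ?_⟩
  · rw [hf]
    split_ifs with h
    · simp [χ, h.1]
    · simp
  · by_cases hj : j ∈ supp A
    · refine tendsto_const_nhds.congr' ?_
      filter_upwards [eventually_gt_atTop (idx A j)] with L hL
      simp [hf, χ, hj, hL]
    · simp [hf, χ, hj]
  · funext k
    simp [χ, (rep_mem_maxima hmax k).1, idx_rep hmax k]

theorem supp_infinite
    (hA : ¬ ∃ t : Finset (ℕ → ℂ), (A : Set (ℕ → ℂ)) ⊆ Submodule.span ℂ (t : Set (ℕ → ℂ))) :
    (supp A).Infinite := by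
  classical
  intro hfin
  refine hA ⟨hfin.toFinset.image fun j => Pi.single j 1, fun ξ hξ => ?_⟩
  have hξ_eq : ξ = ∑ j ∈ hfin.toFinset, ξ j • Pi.single j (1 : ℂ) := by
    funext i
    by_cases hi : i ∈ supp A
    · simp [Finset.sum_apply, Pi.single_apply, hi]
    · simp [Finset.sum_apply, Pi.single_apply, hi, eq_zero_of_notMem_supp hξ hi]
  rw [hξ_eq]
  exact Submodule.sum_mem _ fun j hj =>
    Submodule.smul_mem _ _ (Submodule.subset_span (Finset.mem_image_of_mem _ hj))

end ClosedSubalgebraS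

open ClosedSubalgebraS

/-- Every infinite-dimensional closed *-subalgebra `E` of `s` is isomorphic as a
topological *-algebra to `λ^∞(n_k^q)` for some strictly increasing sequence `(n_k)` of
(positive) natural numbers: there is a bijection `Φ` of `E` onto `λ^∞(n_k^q)` which is a
`ℂ`-algebra homomorphism preserving conjugation, continuous with continuous inverse
(expressed by mutual seminorm estimates). -/
theorem stmt_7 (E : Set (ℕ → ℂ))
    (hEsub : ∀ ξ ∈ E, inS ξ)
    (hadd : ∀ ξ ∈ E, ∀ η ∈ E, ξ + η ∈ E)
    (hsmul : ∀ (c : ℂ), ∀ ξ ∈ E, c • ξ ∈ E)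
    (hmul : ∀ ξ ∈ E, ∀ η ∈ E, ξ * η ∈ E)
    (hstar : ∀ ξ ∈ E, star ξ ∈ E)
    (hclosed : ∀ ξ : ℕ → ℂ, inS ξ →
      (∀ q : ℕ, ∀ ε : ℝ, 0 < ε → ∃ η ∈ E, sNorm q (ξ - η) < ε) → ξ ∈ E)
    (hinfdim : ¬ ∃ t : Finset (ℕ → ℂ),
      E ⊆ (Submodule.span ℂ (t : Set (ℕ → ℂ)) : Set (ℕ → ℂ))) :
    ∃ n : ℕ → ℕ, StrictMono n ∧ (∀ k, 0 < n k) ∧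
      ∃ Φ : (ℕ → ℂ) → (ℕ → ℂ),
        Set.BijOn Φ E (lambdaN n) ∧
        (∀ ξ ∈ E, ∀ η ∈ E, Φ (ξ + η) = Φ ξ + Φ η) ∧
        (∀ (c : ℂ), ∀ ξ ∈ E, Φ (c • ξ) = c • Φ ξ) ∧
        (∀ ξ ∈ E, ∀ η ∈ E, Φ (ξ * η) = Φ ξ * Φ η) ∧
        (∀ ξ ∈ E, Φ (star ξ) = star (Φ ξ)) ∧
        (∀ q : ℕ, ∃ p : ℕ, ∃ C : ℝ, 0 < C ∧ ∀ ξ ∈ E, kNorm n q (Φ ξ) ≤ C * sNorm p ξ) ∧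
        (∀ p : ℕ, ∃ q : ℕ, ∃ C : ℝ, 0 < C ∧ ∀ ξ ∈ E, sNorm p ξ ≤ C * kNorm n q (Φ ξ)) := by
  obtain ⟨ξ₀, hξ₀⟩ : E.Nonempty :=
    Set.nonempty_iff_ne_empty.mpr fun h => hinfdim ⟨∅, by simp [h]⟩
  let A : NonUnitalStarSubalgebra ℂ (ℕ → ℂ) :=
    { carrier := E
      add_mem' := fun hξ hη => hadd _ hξ _ hη
      zero_mem' := by simpa using hsmul 0 ξ₀ hξ₀
      mul_mem' := fun hξ hη => hmul _ hξ _ hη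
      smul_mem' := fun c _ hξ => hsmul c _ hξ
      star_mem' := fun hξ => hstar _ hξ }
  have hAs : ∀ ξ ∈ A, inS ξ := hEsub
  have hA : IsClosedInS A := hclosed
  have hmax : (maxima A).Infinite := maxima_infinite hAs (supp_infinite (A := A) hinfdim)
  have hκ : 0 < √(∑' j : ℕ, (((j : ℝ) + 1) ^ 2)⁻¹) :=
    Real.sqrt_pos.mpr (summable_inv_succ_sq.tsum_pos (fun j => by positivity) 0 (by positivity))
  refine ⟨fun k => rep A k + 1, (rep_strictMono hmax).add_const 1, fun _ => Nat.succ_pos _,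
    fun ξ => ξ ∘ rep A, ⟨fun ξ hξ => comp_rep_mem_lambdaN hAs hξ,
      fun ξ hξ η hη => eq_of_comp_rep_eq hAs hξ hη,
      fun c hc => exists_mem_comp_rep_eq hAs hA hmax hc⟩,
    fun _ _ _ _ => rfl, fun _ _ _ => rfl, fun _ _ _ _ => rfl, fun _ _ => rfl,
    fun q => ⟨q, 1, one_pos, fun ξ hξ => ?_⟩, fun p => ⟨p + 1, _, hκ, fun ξ hξ => ?_⟩⟩
  · rw [one_mul]
    exact kNorm_comp_rep_le_sNorm hAs hξ q
  · rw [mul_comm]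
    exact sNorm_le_of_forall_le (norm_mul_pow_le_kNorm_comp_rep hAs hξ (p + 1))
end
end

section
/- Let (f_k)_{k∈ℕ} be an orthonormal sequence in ℓ₂(ℕ,ℂ) with each f_k ∈ s, and let (N_k)_{k∈ℕ} be a family of finite nonempty pairwise disjoint subsets of ℕ. For r ∈ ℕ₀ let σ_r : ℕ → ℕ be a bijection such that the sequence k ↦ max_{j∈N_{σ_r(k)}} |f_j|_r is non-decreasing. Then there exists r₀ ∈ ℕ such that for all r ≥ r₀, lim_{k→∞} k / (max_{j∈N_{σ_r(k)}} |f_j|_r) = 0. -/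
noncomputable section

/-!
Choosing `j_k ∈ N_{σ_r(k)}` at which the maximum is attained gives an injective sequence with
`A_k = |f_{j_k}|_r`. Cauchy–Schwarz interpolation gives `1 = |f|_0^2 ≤ |f|_{-1}^2 |f|_2 ≤
|f|_{-1}^2 |f|_r` for `r ≥ 2`, and Bessel's inequality at each coordinate vector gives
`∑_j |f_j|_{-1}^2 ≤ ∑_m (m+1)^{-2} < ∞`. So `1 / A_k` is summable and non-increasing, which
forces `k / A_k → 0`; thus `r₀ = 2` works.
-/

open Filter Function

theorem Antitone.tendsto_nat_mul_of_summable {b : ℕ → ℝ} (hb : Antitone b) (hs : Summable b) :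
    Tendsto (fun n : ℕ => (n : ℝ) * b n) atTop (nhds 0) := by
  have hb0 : ∀ n, 0 ≤ b n := fun n => hb.le_of_tendsto hs.tendsto_atTop_zero n
  have hhalf : Tendsto (fun n : ℕ => n / 2) atTop atTop :=
    tendsto_atTop_atTop.2 fun c => ⟨2 * c, fun n hn => by omega⟩
  have htail : Tendsto (fun n : ℕ => 2 * ∑' i, b (i + n / 2)) atTop (nhds 0) := by
    simpa using ((tendsto_sum_nat_add b).comp hhalf).const_mul (2 : ℝ)
  refine tendsto_of_tendsto_of_tendsto_of_le_of_le tendsto_const_nhds htail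
    (fun n => mul_nonneg n.cast_nonneg (hb0 n)) fun n => ?_
  -- the `n - n / 2` terms `b (n / 2), …, b (n - 1)` are each at least `b n`
  have hblock : ((n - n / 2 : ℕ) : ℝ) * b n ≤ ∑' i, b (i + n / 2) := by
    calc ((n - n / 2 : ℕ) : ℝ) * b n
        ≤ ∑ i ∈ Finset.range (n - n / 2), b (i + n / 2) := by
          simpa using Finset.card_nsmul_le_sum (Finset.range (n - n / 2))
            (fun i => b (i + n / 2)) (b n) fun i hi => hb (by simp at hi; omega)
      _ ≤ ∑' i, b (i + n / 2) :=
          ((summable_nat_add_iff (n / 2)).2 hs).sum_le_tsum _ fun i _ => hb0 _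
  have hn : (n : ℝ) ≤ 2 * ((n - n / 2 : ℕ) : ℝ) := by
    exact_mod_cast (by omega : n ≤ 2 * (n - n / 2))
  calc (n : ℝ) * b n ≤ 2 * ((n - n / 2 : ℕ) : ℝ) * b n := mul_le_mul_of_nonneg_right hn (hb0 n)
    _ ≤ 2 * ∑' i, b (i + n / 2) := by
        rw [mul_assoc]
        exact mul_le_mul_of_nonneg_left hblock zero_le_two

theorem sq_tsum_le_tsum_div_mul_tsum_mul {ι : Type*} {a c : ι → ℝ} (ha : ∀ i, 0 ≤ a i)
    (hc : ∀ i, 0 < c i) (hdiv : Summable fun i => a i / c i)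
    (hmul : Summable fun i => a i * c i) :
    (∑' i, a i) ^ 2 ≤ (∑' i, a i / c i) * ∑' i, a i * c i := by
  have hprod : ∀ i, √(a i / c i) * √(a i * c i) = a i := fun i => by
    rw [← Real.sqrt_mul (div_nonneg (ha i) (hc i).le), show a i / c i * (a i * c i) = a i ^ 2 by field_simp [(hc i).ne'], Real.sqrt_sq (ha i)]
  have key := Real.inner_le_Lp_mul_Lq_tsum_of_nonneg (f := fun i => √(a i / c i))
    (g := fun i => √(a i * c i)) Real.HolderConjugate.two_two (fun _ => Real.sqrt_nonneg _)
    (fun _ => Real.sqrt_nonneg _)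
    (by simpa [Real.sq_sqrt (div_nonneg (ha _) (hc _).le)] using hdiv)
    (by simpa [Real.sq_sqrt (mul_nonneg (ha _) (hc _).le)] using hmul)
  simp only [hprod, Real.rpow_two, Real.sq_sqrt (div_nonneg (ha _) (hc _).le),
    Real.sq_sqrt (mul_nonneg (ha _) (hc _).le), ← Real.sqrt_eq_rpow] at key
  calc (∑' i, a i) ^ 2 ≤ (√(∑' i, a i / c i) * √(∑' i, a i * c i)) ^ 2 :=
        pow_le_pow_left₀ (tsum_nonneg ha) key 2
    _ = (∑' i, a i / c i) * ∑' i, a i * c i := by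
        rw [mul_pow, Real.sq_sqrt (tsum_nonneg fun i => div_nonneg (ha i) (hc i).le),
          Real.sq_sqrt (tsum_nonneg fun i => mul_nonneg (ha i) (hc i).le)]

/-- `|ξ|_{-1}^2`, the square of the norm dual to `|·|_1`. -/
def sNormNegOneSq (ξ : ℕ → ℂ) : ℝ :=
  ∑' m : ℕ, ‖ξ m‖ ^ 2 / ((m : ℝ) + 1) ^ 2

theorem sNormNegOneSq_nonneg (ξ : ℕ → ℂ) : 0 ≤ sNormNegOneSq ξ :=
  tsum_nonneg fun _ => by positivity

theorem summable_norm_sq_div {ξ : ℕ → ℂ} (hξ : Summable fun m => ‖ξ m‖ ^ 2) :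
    Summable fun m : ℕ => ‖ξ m‖ ^ 2 / ((m : ℝ) + 1) ^ 2 :=
  hξ.of_nonneg_of_le (fun _ => by positivity) fun m =>
    div_le_self (by positivity) (one_le_pow₀ (by linarith [m.cast_nonneg (α := ℝ)]))

theorem inS.summable_norm_sq {ξ : ℕ → ℂ} (hξ : inS ξ) : Summable fun m => ‖ξ m‖ ^ 2 := by
  simpa using hξ 0

theorem sNorm_mono_s11 {ξ : ℕ → ℂ} (hξ : inS ξ) {q q' : ℕ} (h : q ≤ q') : sNorm q ξ ≤ sNorm q' ξ :=
  Real.sqrt_le_sqrt <| (hξ q).tsum_le_tsum (fun m => mul_le_mul_of_nonneg_left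
    (pow_le_pow_right₀ (by linarith [m.cast_nonneg (α := ℝ)]) (by omega)) (by positivity)) (hξ q')

/-- Cauchy–Schwarz twice: `|ξ|_0^2 ≤ |ξ|_{-1} |ξ|_1` and `|ξ|_1^2 ≤ |ξ|_0 |ξ|_2`. -/
theorem one_le_sNormNegOneSq_mul_sNorm_two {ξ : ℕ → ℂ} (hξ : inS ξ)
    (hone : ∑' m, ‖ξ m‖ ^ 2 = 1) : 1 ≤ sNormNegOneSq ξ * sNorm 2 ξ := by
  have hc : ∀ m : ℕ, (0 : ℝ) < ((m : ℝ) + 1) ^ 2 := fun m => by positivity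
  have h1 : Summable fun m : ℕ => ‖ξ m‖ ^ 2 * ((m : ℝ) + 1) ^ 2 := by simpa using hξ 1
  have h2 : Summable fun m : ℕ => ‖ξ m‖ ^ 2 * ((m : ℝ) + 1) ^ 2 * ((m : ℝ) + 1) ^ 2 := by
    simpa [mul_assoc, ← pow_add] using hξ 2
  set S := ∑' m : ℕ, ‖ξ m‖ ^ 2 * ((m : ℝ) + 1) ^ 2
  have hS : S ≤ sNorm 2 ξ := by
    have := sq_tsum_le_tsum_div_mul_tsum_mul (fun m => by positivity) hc
      (by simpa [(hc _).ne'] using hξ.summable_norm_sq) h2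
    simp only [mul_div_cancel_right₀ _ (hc _).ne', hone, one_mul] at this
    rw [sNorm, Real.le_sqrt (tsum_nonneg fun _ => by positivity)
      (tsum_nonneg fun _ => by positivity)]
    simpa [mul_assoc, ← pow_add] using this
  have := sq_tsum_le_tsum_div_mul_tsum_mul (fun m => by positivity) hc
    (summable_norm_sq_div hξ.summable_norm_sq) h1
  rw [hone, one_pow] at this
  exact this.trans (mul_le_mul_of_nonneg_left hS (sNormNegOneSq_nonneg ξ))

def IsOrthonormalSeq (f : ℕ → ℕ → ℂ) : Prop :=
  ∀ i j : ℕ, (∑' m : ℕ, (starRingEnd ℂ) (f i m) * f j m) = if i = j then 1 else 0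

namespace IsOrthonormalSeq

variable {f : ℕ → ℕ → ℂ} (hf : IsOrthonormalSeq f)
include hf

theorem hasSum_norm_sq (j : ℕ) : HasSum (fun m => ‖f j m‖ ^ 2) 1 := by
  have h := hf j j
  simp only [if_pos, Complex.conj_mul'] at h
  have hs : Summable fun m => ‖f j m‖ ^ 2 := by
    by_contra hns
    exact one_ne_zero (h ▸ tsum_eq_zero_of_not_summable (by exact_mod_cast hns))
  refine hs.hasSum_iff.2 (Complex.ofReal_injective ?_)
  rw [Complex.ofReal_tsum]
  exact_mod_cast h

theorem memℓp_two (j : ℕ) : Memℓp (f j) 2 :=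
  memℓp_gen (by simpa using (hf.hasSum_norm_sq j).summable)

theorem orthonormal_lp :
    Orthonormal ℂ fun j => (⟨f j, hf.memℓp_two j⟩ : lp (fun _ : ℕ => ℂ) 2) := by
  rw [orthonormal_iff_ite]
  intro i j
  rw [← hf i j, lp.inner_eq_tsum]
  exact tsum_congr fun m => (RCLike.inner_apply _ _).trans (mul_comm _ _)

/-- Bessel's inequality for the coordinate vector `e_m`. -/
theorem sum_norm_sq_apply_le_one (K : Finset ℕ) (m : ℕ) : ∑ j ∈ K, ‖f j m‖ ^ 2 ≤ 1 := by
  classical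
  set x : lp (fun _ : ℕ => ℂ) 2 := lp.single 2 m 1
  have hx : ‖x‖ = 1 := by simpa using lp.norm_single (E := fun _ : ℕ => ℂ) (by norm_num) m 1
  simpa [x, hx, lp.inner_single_right, RCLike.inner_apply] using
    hf.orthonormal_lp.sum_inner_products_le (s := K) x

theorem summable_sNormNegOneSq : Summable fun j => sNormNegOneSq (f j) := by
  have hdiv : ∀ j, Summable fun m : ℕ => ‖f j m‖ ^ 2 / ((m : ℝ) + 1) ^ 2 := fun j =>
    summable_norm_sq_div (hf.hasSum_norm_sq j).summable
  have hinv : Summable fun m : ℕ => 1 / ((m : ℝ) + 1) ^ 2 := by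
    simpa using (summable_nat_add_iff 1).2 (Real.summable_one_div_nat_pow.2 one_lt_two)
  refine summable_of_sum_le (c := ∑' m : ℕ, 1 / ((m : ℝ) + 1) ^ 2)
    (fun j => sNormNegOneSq_nonneg (f j)) fun K => ?_
  simp only [sNormNegOneSq]
  rw [← Summable.tsum_finsetSum fun j _ => hdiv j]
  refine (summable_sum fun j _ => hdiv j).tsum_le_tsum (fun m => ?_) hinv
  rw [← Finset.sum_div]
  exact div_le_div_of_nonneg_right (hf.sum_norm_sq_apply_le_one K m) (by positivity)

theorem tendsto_nat_div_sNorm_comp (hfs : ∀ k, inS (f k)) {r : ℕ} (hr : 2 ≤ r)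
    {J : ℕ → ℕ} (hJ : Injective J) (hmono : Monotone fun k => sNorm r (f (J k))) :
    Tendsto (fun k : ℕ => (k : ℝ) / sNorm r (f (J k))) atTop (nhds 0) := by
  have hinterp : ∀ j, 1 ≤ sNormNegOneSq (f j) * sNorm 2 (f j) := fun j =>
    one_le_sNormNegOneSq_mul_sNorm_two (hfs j) (hf.hasSum_norm_sq j).tsum_eq
  have hpos : ∀ j, 0 < sNorm 2 (f j) := fun j =>
    pos_of_mul_pos_right (one_pos.trans_le (hinterp j)) (sNormNegOneSq_nonneg (f j))
  have hinv_le : ∀ j, (sNorm r (f j))⁻¹ ≤ sNormNegOneSq (f j) := fun j =>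
    calc (sNorm r (f j))⁻¹ ≤ (sNorm 2 (f j))⁻¹ := inv_anti₀ (hpos j) (sNorm_mono_s11 (hfs j) hr)
      _ ≤ sNormNegOneSq (f j) := (inv_le_iff_one_le_mul₀ (hpos j)).2 (by linarith [hinterp j])
  have hanti : Antitone fun k => (sNorm r (f (J k)))⁻¹ := fun k l hkl =>
    inv_anti₀ ((hpos _).trans_le (sNorm_mono_s11 (hfs _) hr)) (hmono hkl)
  have hsum : Summable fun k => (sNorm r (f (J k)))⁻¹ :=
    (hf.summable_sNormNegOneSq.comp_injective hJ).of_nonneg_of_le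
      (fun k => inv_nonneg.2 (Real.sqrt_nonneg _)) fun k => hinv_le (J k)
  simpa only [div_eq_mul_inv] using hanti.tendsto_nat_mul_of_summable hsum

end IsOrthonormalSeq

/-- Let `(f_k)` be an orthonormal sequence in `ℓ₂` with each `f_k ∈ s`, `(N_k)` finite
nonempty pairwise disjoint subsets of `ℕ`, and for each `r` let `σ_r` be a bijection of
`ℕ` making `k ↦ max_{j ∈ N_{σ_r(k)}} |f_j|_r` non-decreasing. Then there is `r₀` such that
for all `r ≥ r₀`, `k / max_{j ∈ N_{σ_r(k)}} |f_j|_r → 0` as `k → ∞`. -/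
theorem stmt_11 (f : ℕ → ℕ → ℂ) (hfs : ∀ k, inS (f k))
    (hon : ∀ i j : ℕ,
      (∑' m : ℕ, (starRingEnd ℂ) (f i m) * f j m) = if i = j then 1 else 0)
    (N : ℕ → Finset ℕ) (hne : ∀ k, (N k).Nonempty)
    (hdisj : ∀ k l, k ≠ l → Disjoint (N k) (N l))
    (σ : ℕ → ℕ → ℕ) (hσbij : ∀ r, Function.Bijective (σ r))
    (hσmono : ∀ r : ℕ,
      Monotone fun k => (N (σ r k)).sup' (hne (σ r k)) fun j => sNorm r (f j)) :
    ∃ r₀ : ℕ, ∀ r : ℕ, r₀ ≤ r →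
      Filter.Tendsto
        (fun k : ℕ => (k : ℝ) / (N (σ r k)).sup' (hne (σ r k)) fun j => sNorm r (f j))
        Filter.atTop (nhds 0) := by
  refine ⟨2, fun r hr => ?_⟩
  choose J hJmem hJeq using fun k =>
    (N (σ r k)).exists_mem_eq_sup' (hne (σ r k)) fun j => sNorm r (f j)
  have hJ : Injective J := fun k l hkl => by_contra fun hkl' =>
    Finset.disjoint_left.1 (hdisj _ _ ((hσbij r).1.ne hkl')) (hJmem k) (hkl ▸ hJmem l)
  have hmono := hσmono r
  simp only [hJeq] at hmono ⊢
  exact IsOrthonormalSeq.tendsto_nat_div_sNorm_comp hon hfs hr hJ hmono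

end
end

section
/- There exists a sequence (f_k)_{k∈ℕ} of elements of s which is orthonormal in ℓ₂(ℕ,ℂ) and satisfies: for all p, r ∈ ℕ, lim_{k→∞} |f_k|_{∞,p+1} / (|f_k|_{∞,p})^r = ∞, where |ξ|_{∞,q} := sup_{j∈ℕ} |ξ_j| j^q. In particular, there is no p ∈ ℕ₀ such that for every q ∈ ℕ₀ there exist r ∈ ℕ₀ and C > 0 with |f_k|_{∞,q} ≤ C·(|f_k|_{∞,p})^r for all k ∈ ℕ. -/
noncomputable section

/-- The sup-norm `|ξ|_{∞,q} = sup_j |ξ_j| (j+1)^q`. -/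
def supNorm (q : ℕ) (ξ : ℕ → ℂ) : ℝ :=
  ⨆ j : ℕ, ‖ξ j‖ * ((j : ℝ) + 1) ^ q

/-!
Let `N` be the `k`-th prime and `c = k + 2`, and let `f_k` have its support at the indices `j`
with `j + 1 = N ^ c ^ i`, `0 ≤ i ≤ k + 1`. Different primes give disjoint supports, hence an
orthogonal family, and the amplitude at `N` absorbs what is needed for `‖f_k‖₂ = 1`. The
amplitude `N ^ -(i c^(i+1) + 1)` at `N ^ c ^ (i+1)` is tuned so that every spike has weighted
size at most `N ^ (p c^p)` in `|·|_{∞,p}`, while the spike with `i = p` alone gives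
`|f_k|_{∞,p+1} ≥ N ^ (c^(p+1) - 1)`. As `c^(p+1) = c · c^p` with `c → ∞`, the ratio
`|f_k|_{∞,p+1} / |f_k|_{∞,p}^r` is at least `2 ^ (k - r p)`, which also rules out any bound
`|f_k|_{∞,p+1} ≤ C |f_k|_{∞,p}^r`.
-/

open Function Filter

section SpikeSeq

variable {ι : Type*} {pos : ι → ℕ} {a : ι → ℝ}

def spikeSeq (pos : ι → ℕ) (a : ι → ℝ) : ℕ → ℂ :=
  extend pos (fun i => (a i : ℂ)) 0

theorem spikeSeq_apply (hpos : Injective pos) (i : ι) : spikeSeq pos a (pos i) = a i :=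
  hpos.extend_apply _ _ i

theorem support_spikeSeq_subset : support (spikeSeq pos a) ⊆ Set.range pos := by
  intro j hj
  by_contra hpos
  exact hj (extend_apply' _ _ j hpos)

theorem inS_of_finite_support {ξ : ℕ → ℂ} (hξ : (support ξ).Finite) : inS ξ := fun _ =>
  summable_of_hasFiniteSupport <| hξ.subset fun j hj hξj => hj (by simp [hξj])

theorem le_supNorm {ξ : ℕ → ℂ} (hξ : (support ξ).Finite) (q j : ℕ) :
    ‖ξ j‖ * ((j : ℝ) + 1) ^ q ≤ supNorm q ξ := by
  obtain ⟨M, hM⟩ := (hξ.image fun j => ‖ξ j‖ * ((j : ℝ) + 1) ^ q).bddAbove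
  refine le_ciSup (f := fun j => ‖ξ j‖ * ((j : ℝ) + 1) ^ q) ⟨max M 0, ?_⟩ j
  rintro _ ⟨i, rfl⟩
  by_cases hi : ξ i = 0
  · simp [hi]
  · exact le_max_of_le_left (hM ⟨i, hi, rfl⟩)

theorem tsum_conj_mul_eq_zero_of_disjoint {ξ η : ℕ → ℂ} (h : Disjoint (support ξ) (support η)) :
    ∑' m, starRingEnd ℂ (ξ m) * η m = 0 := by
  refine (tsum_congr fun m => ?_).trans tsum_zero
  by_cases hm : ξ m = 0
  · simp [hm]
  · simp [notMem_support.1 (Set.disjoint_left.1 h hm)]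

theorem supNorm_spikeSeq_le (hpos : Injective pos) {q : ℕ} {M : ℝ} (hM : 0 ≤ M)
    (h : ∀ i, |a i| * ((pos i : ℝ) + 1) ^ q ≤ M) : supNorm q (spikeSeq pos a) ≤ M := by
  refine ciSup_le fun j => ?_
  by_cases hj : j ∈ Set.range pos
  · obtain ⟨i, rfl⟩ := hj
    simpa [spikeSeq_apply hpos] using h i
  · simp [spikeSeq, extend_apply' _ _ j hj, hM]

theorem tsum_conj_mul_spikeSeq_self [Fintype ι] (hpos : Injective pos) :
    ∑' m, starRingEnd ℂ (spikeSeq pos a m) * spikeSeq pos a m = ((∑ i, a i ^ 2 : ℝ) : ℂ) := by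
  rw [← hpos.tsum_eq, tsum_fintype]
  · push_cast
    simp [spikeSeq_apply hpos, sq]
  · exact (support_mul_subset_right _ _).trans support_spikeSeq_subset

variable [Finite ι]

theorem inS_spikeSeq : inS (spikeSeq pos a) :=
  inS_of_finite_support ((Set.finite_range pos).subset support_spikeSeq_subset)

theorem le_supNorm_spikeSeq (hpos : Injective pos) (q : ℕ) (i : ι) :
    |a i| * ((pos i : ℝ) + 1) ^ q ≤ supNorm q (spikeSeq pos a) := by
  simpa [spikeSeq_apply hpos] using
    le_supNorm ((Set.finite_range pos).subset support_spikeSeq_subset) q (pos i)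

end SpikeSeq

theorem not_exists_pow_bound_of_tendsto {g : ℕ → ℕ → ℝ} (hg : ∀ p k, 0 < g p k)
    (h : ∀ p r, Tendsto (fun k => g (p + 1) k / g p k ^ r) atTop atTop) :
    ¬ ∃ p : ℕ, ∀ q : ℕ, ∃ r : ℕ, ∃ C : ℝ, 0 < C ∧ ∀ k : ℕ, g q k ≤ C * g p k ^ r := by
  rintro ⟨p, hp⟩
  obtain ⟨r, C, -, hC⟩ := hp (p + 1)
  obtain ⟨k, hk⟩ := ((h p r).eventually_gt_atTop C).exists
  exact hk.not_ge ((div_le_iff₀ (pow_pos (hg p k) r)).2 (hC k))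

theorem pow_succ_mul_le {c : ℕ} (hc : 0 < c) (m p : ℕ) :
    c ^ (m + 1) * p ≤ m * c ^ (m + 1) + 1 + p * c ^ p := by
  rcases le_or_gt p m with hpm | hmp
  · calc c ^ (m + 1) * p ≤ m * c ^ (m + 1) := by rw [mul_comm m]; gcongr
      _ ≤ m * c ^ (m + 1) + 1 + p * c ^ p := by omega
  · calc c ^ (m + 1) * p ≤ p * c ^ p := by rw [mul_comm p]; gcongr; exact hmp
      _ ≤ m * c ^ (m + 1) + 1 + p * c ^ p := by omega

theorem mul_pow_add_le_pow_succ_sub_one {r p k : ℕ} (hk : r * p ≤ k) :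
    r * (p * (k + 2) ^ p) + (k - r * p) ≤ (k + 2) ^ (p + 1) - 1 := by
  obtain ⟨d, rfl⟩ := Nat.exists_eq_add_of_le hk
  have hX : 1 ≤ (r * p + d + 2) ^ p := Nat.one_le_pow _ _ (by omega)
  rw [Nat.add_sub_cancel_left, pow_succ]
  refine Nat.le_sub_one_of_lt ?_
  nlinarith

namespace Witness

theorem two_le_nth_prime (k : ℕ) : (2 : ℝ) ≤ Nat.nth Nat.Prime k := by
  exact_mod_cast (Nat.prime_nth_prime k).two_le

def spikePos (k : ℕ) (i : Fin (k + 2)) : ℕ := Nat.nth Nat.Prime k ^ (k + 2) ^ (i : ℕ) - 1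

theorem spikePos_add_one (k : ℕ) (i : Fin (k + 2)) :
    spikePos k i + 1 = Nat.nth Nat.Prime k ^ (k + 2) ^ (i : ℕ) :=
  Nat.sub_add_cancel (Nat.one_le_pow _ _ (Nat.prime_nth_prime k).pos)

theorem cast_spikePos_add_one (k : ℕ) (i : Fin (k + 2)) :
    (spikePos k i : ℝ) + 1 = (Nat.nth Nat.Prime k : ℝ) ^ (k + 2) ^ (i : ℕ) := by
  exact_mod_cast spikePos_add_one k i

theorem spikePos_injective (k : ℕ) : Injective (spikePos k) := by
  intro i j h
  have := congrArg (· + 1) h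
  simp only [spikePos_add_one] at this
  exact Fin.ext (Nat.pow_right_injective (by omega)
    (Nat.pow_right_injective (Nat.prime_nth_prime k).two_le this))

theorem disjoint_range_spikePos {k l : ℕ} (hkl : k ≠ l) :
    Disjoint (Set.range (spikePos k)) (Set.range (spikePos l)) := by
  refine Set.disjoint_left.2 ?_
  rintro _ ⟨i, rfl⟩ ⟨j, h⟩
  have := congrArg (· + 1) h
  simp only [spikePos_add_one] at this
  rw [← Nat.sub_add_cancel (Nat.one_le_pow _ _ (by omega : 0 < l + 2)),
    ← Nat.sub_add_cancel (Nat.one_le_pow (i : ℕ) _ (by omega : 0 < k + 2))] at this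
  exact hkl (Nat.nth_injective Nat.infinite_setOfPred_prime
    (Nat.Prime.pow_inj (Nat.prime_nth_prime l) (Nat.prime_nth_prime k) this).1).symm

def tailAmp (k : ℕ) (i : Fin (k + 1)) : ℝ :=
  ((Nat.nth Nat.Prime k : ℝ) ^ ((i : ℕ) * (k + 2) ^ ((i : ℕ) + 1) + 1))⁻¹

theorem tailAmp_pos (k : ℕ) (i : Fin (k + 1)) : 0 < tailAmp k i :=
  inv_pos.2 (pow_pos (two_pos.trans_le (two_le_nth_prime k)) _)

def tailMass (k : ℕ) : ℝ := ∑ i, tailAmp k i ^ 2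

theorem tailAmp_le (k : ℕ) (i : Fin (k + 1)) : tailAmp k i ≤ (1 / 2) ^ ((i : ℕ) + 1) := by
  have he : (i : ℕ) + 1 ≤ (i : ℕ) * (k + 2) ^ ((i : ℕ) + 1) + 1 :=
    Nat.succ_le_succ (Nat.le_mul_of_pos_right _ (by positivity))
  calc tailAmp k i ≤ ((2 : ℝ) ^ ((i : ℕ) * (k + 2) ^ ((i : ℕ) + 1) + 1))⁻¹ :=
        inv_anti₀ (by positivity) (pow_le_pow_left₀ zero_le_two (two_le_nth_prime k) _)
    _ ≤ (1 / 2) ^ ((i : ℕ) + 1) := by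
        rw [← inv_pow, ← one_div]
        exact pow_le_pow_of_le_one (by norm_num) (by norm_num) he

theorem tailMass_le_one (k : ℕ) : tailMass k ≤ 1 := by
  have hsq (i : Fin (k + 1)) : tailAmp k i ^ 2 ≤ (1 / 2) ^ ((i : ℕ) + 1) := by
    have hle := tailAmp_le k i
    exact (pow_le_of_le_one (tailAmp_pos k i).le (hle.trans (pow_le_one₀ (by norm_num) (by norm_num)))
      two_ne_zero).trans hle
  calc tailMass k ≤ ∑ i : Fin (k + 1), (1 / 2 : ℝ) ^ ((i : ℕ) + 1) :=
        Finset.sum_le_sum fun i _ => hsq i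
    _ = 1 / 2 * ∑ i ∈ Finset.range (k + 1), (1 / 2 : ℝ) ^ i := by
        rw [Fin.sum_univ_eq_sum_range (fun i => (1 / 2 : ℝ) ^ (i + 1)), Finset.mul_sum]
        simp only [pow_succ, mul_comm]
    _ ≤ 1 := by linarith [sum_geometric_two_le (k + 1)]

def spikeAmp (k : ℕ) : Fin (k + 2) → ℝ := Fin.cons √(1 - tailMass k) (tailAmp k)

def witness (k : ℕ) : ℕ → ℂ := spikeSeq (spikePos k) (spikeAmp k)

theorem sum_spikeAmp_sq (k : ℕ) : ∑ i, spikeAmp k i ^ 2 = 1 := by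
  rw [Fin.sum_univ_succ]
  simp only [spikeAmp, Fin.cons_zero, Fin.cons_succ]
  rw [Real.sq_sqrt (sub_nonneg.2 (tailMass_le_one k)), tailMass]
  ring

theorem tsum_conj_mul_witness (k l : ℕ) :
    ∑' m, starRingEnd ℂ (witness k m) * witness l m = if k = l then 1 else 0 := by
  split_ifs with hkl
  · subst hkl
    simp [witness, tsum_conj_mul_spikeSeq_self (spikePos_injective k), sum_spikeAmp_sq]
  · exact tsum_conj_mul_eq_zero_of_disjoint ((disjoint_range_spikePos hkl).mono
      support_spikeSeq_subset support_spikeSeq_subset)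

theorem supNorm_witness_le (p k : ℕ) :
    supNorm p (witness k) ≤ (Nat.nth Nat.Prime k : ℝ) ^ (p * (k + 2) ^ p) := by
  have hN : (1 : ℝ) ≤ Nat.nth Nat.Prime k := one_le_two.trans (two_le_nth_prime k)
  refine supNorm_spikeSeq_le (spikePos_injective k) (by positivity) fun i => ?_
  rw [cast_spikePos_add_one, ← pow_mul]
  induction i using Fin.cases with
  | zero =>
    have hmass : 0 ≤ tailMass k := Finset.sum_nonneg fun i _ => sq_nonneg _
    simp only [spikeAmp, Fin.cons_zero, Fin.val_zero, pow_zero, one_mul]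
    rw [abs_of_nonneg (Real.sqrt_nonneg _)]
    exact (mul_le_of_le_one_left (by positivity) (Real.sqrt_le_one.2 (by linarith))).trans
      (pow_le_pow_right₀ hN (Nat.le_mul_of_pos_right _ (by positivity)))
  | succ m =>
    simp only [spikeAmp, Fin.cons_succ, Fin.val_succ]
    rw [abs_of_pos (tailAmp_pos k m), tailAmp, inv_mul_le_iff₀ (by positivity), ← pow_add]
    exact pow_le_pow_right₀ hN (pow_succ_mul_le (by omega) _ _)

theorem pow_le_supNorm_witness {p k : ℕ} (hp : p ≤ k) :
    (Nat.nth Nat.Prime k : ℝ) ^ ((k + 2) ^ (p + 1) - 1) ≤ supNorm (p + 1) (witness k) := by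
  have h := le_supNorm_spikeSeq (a := spikeAmp k) (spikePos_injective k) (p + 1)
    (Fin.succ ⟨p, by omega⟩)
  rw [cast_spikePos_add_one] at h
  change |((Nat.nth Nat.Prime k : ℝ) ^ (p * (k + 2) ^ (p + 1) + 1))⁻¹| *
    ((Nat.nth Nat.Prime k : ℝ) ^ (k + 2) ^ (p + 1)) ^ (p + 1) ≤ _ at h
  have hexp : (k + 2) ^ (p + 1) * (p + 1) =
      (p * (k + 2) ^ (p + 1) + 1) + ((k + 2) ^ (p + 1) - 1) := by
    zify [Nat.one_le_pow (p + 1) (k + 2) (by omega)]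
    ring
  have hN : (0 : ℝ) < Nat.nth Nat.Prime k := two_pos.trans_le (two_le_nth_prime k)
  rwa [abs_of_pos (by positivity), ← pow_mul, hexp, pow_add _ (p * (k + 2) ^ (p + 1) + 1),
    inv_mul_cancel_left₀ (by positivity)] at h

theorem supNorm_witness_pos (p k : ℕ) : 0 < supNorm p (witness k) := by
  refine lt_of_lt_of_le ?_ (le_supNorm_spikeSeq (spikePos_injective k) p (Fin.succ 0))
  exact mul_pos (abs_pos_of_pos (tailAmp_pos k 0)) (by positivity)

theorem two_pow_le_supNorm_ratio {p r k : ℕ} (hk : r * p + p ≤ k) :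
    (2 : ℝ) ^ (k - r * p) ≤ supNorm (p + 1) (witness k) / supNorm p (witness k) ^ r := by
  have hN := two_le_nth_prime k
  rw [le_div_iff₀ (pow_pos (supNorm_witness_pos p k) r)]
  calc (2 : ℝ) ^ (k - r * p) * supNorm p (witness k) ^ r
      ≤ (Nat.nth Nat.Prime k : ℝ) ^ (k - r * p) *
          ((Nat.nth Nat.Prime k : ℝ) ^ (p * (k + 2) ^ p)) ^ r := by
        have := (supNorm_witness_pos p k).le
        gcongr
        exact supNorm_witness_le p k
    _ = (Nat.nth Nat.Prime k : ℝ) ^ (r * (p * (k + 2) ^ p) + (k - r * p)) := by ring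
    _ ≤ (Nat.nth Nat.Prime k : ℝ) ^ ((k + 2) ^ (p + 1) - 1) :=
        pow_le_pow_right₀ (by linarith) (mul_pow_add_le_pow_succ_sub_one (by omega))
    _ ≤ supNorm (p + 1) (witness k) := pow_le_supNorm_witness (by omega)

theorem tendsto_supNorm_ratio (p r : ℕ) :
    Tendsto (fun k => supNorm (p + 1) (witness k) / supNorm p (witness k) ^ r) atTop atTop :=
  tendsto_atTop_mono' _
    ((eventually_ge_atTop (r * p + p)).mono fun _ => two_pow_le_supNorm_ratio)
    ((tendsto_pow_atTop_atTop_of_one_lt one_lt_two).comp (tendsto_sub_atTop_nat _))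

end Witness

open Witness in
/-- There is a sequence `(f_k)` of elements of `s`, orthonormal in `ℓ₂(ℕ,ℂ)`, such that
for all `p, r ∈ ℕ`, `|f_k|_{∞,p+1} / (|f_k|_{∞,p})^r → ∞` as `k → ∞`; in particular there
is no `p` such that for every `q` there are `r` and `C > 0` with
`|f_k|_{∞,q} ≤ C (|f_k|_{∞,p})^r` for all `k`. -/
theorem stmt_16 :
    ∃ f : ℕ → ℕ → ℂ, (∀ k, inS (f k)) ∧
      (∀ i j : ℕ,
        (∑' m : ℕ, (starRingEnd ℂ) (f i m) * f j m) = if i = j then 1 else 0) ∧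
      (∀ p r : ℕ, 1 ≤ p → 1 ≤ r →
        Filter.Tendsto (fun k : ℕ => supNorm (p + 1) (f k) / supNorm p (f k) ^ r)
          Filter.atTop Filter.atTop) ∧
      ¬ ∃ p : ℕ, ∀ q : ℕ, ∃ r : ℕ, ∃ C : ℝ, 0 < C ∧
          ∀ k : ℕ, supNorm q (f k) ≤ C * supNorm p (f k) ^ r :=
  ⟨witness, fun _ => inS_spikeSeq, tsum_conj_mul_witness,
    fun p r _ _ => tendsto_supNorm_ratio p r,
    not_exists_pow_bound_of_tendsto supNorm_witness_pos tendsto_supNorm_ratio⟩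

end
end
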